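/- arXiv:1811.11240 — 8 statements merged into one kernel-verified Lean document; each statement's English description precedes it below -/
import Mathlib

section
/- Let 0 < α < 2, a ≠ 0, γ ∈ ℝ, and E > 0. Then there exist constants ε > 0, C > 0 and ξ* ≥ 1 such that for all ξ > ξ₀ > ξ*, |∫_{ξ₀}^{ξ} sin( a ∫₀^{s} √(1 - β_E(x)) dx + γ ) / s ds| ≤ C ξ₀^{-ε}. -/
/-! With `K = E / c^α` and `p = 2α/(2+α) < 2`, the phase `φ(s) = a ∫₀ˢ √(1 + K x^(-p)) dx + γ`
has derivative `h(s)/s`, where `h(s) = a √(s² + K s^(2-p))` is, for `a > 0`, positive,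
nondecreasing and at least `a s`. Writing `sin φ / s = h⁻¹ · (-cos φ)'` and integrating by parts
on `[ξ₀, ξ]`, the boundary terms contribute `1/h(ξ₀) + 1/h(ξ)` and the total variation of `h⁻¹`
contributes `1/h(ξ₀) - 1/h(ξ)`; hence the integral is at most `2/h(ξ₀) ≤ 2/(a ξ₀)`, and the
estimate holds with `ε = 1`, `C = 2/|a|`. Negative `a` reduce to this via `(a, γ) ↦ (-a, -γ)`. -/

open Filter Set MeasureTheory intervalIntegral Real

section ByParts

variable {u u' v v' : ℝ → ℝ} {a b : ℝ}

theorem abs_integral_mul_deriv_le (hab : a ≤ b)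
    (hu : ∀ x ∈ Icc a b, HasDerivAt u (u' x) x) (hv : ∀ x ∈ Icc a b, HasDerivAt v (v' x) x)
    (hu' : IntervalIntegrable u' volume a b) (hv' : IntervalIntegrable v' volume a b)
    (hv1 : ∀ x ∈ Icc a b, |v x| ≤ 1) :
    |∫ x in a..b, u x * v' x| ≤ |u a| + |u b| + ∫ x in a..b, |u' x| := by
  rw [← uIcc_of_le hab] at hu hv
  rw [integral_mul_deriv_eq_deriv_mul hu hv hu' hv']
  have hb : |u b * v b| ≤ |u b| := by
    rw [abs_mul]; exact mul_le_of_le_one_right (abs_nonneg _) (hv1 b ⟨hab, le_rfl⟩)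
  have ha : |u a * v a| ≤ |u a| := by
    rw [abs_mul]; exact mul_le_of_le_one_right (abs_nonneg _) (hv1 a ⟨le_rfl, hab⟩)
  have hrest : |∫ x in a..b, u' x * v x| ≤ ∫ x in a..b, |u' x| := by
    refine norm_integral_le_of_norm_le (f := fun x => u' x * v x) hab
      (Eventually.of_forall fun x hx => ?_) hu'.abs
    rw [Real.norm_eq_abs, abs_mul]
    exact mul_le_of_le_one_right (abs_nonneg _) (hv1 x (Ioc_subset_Icc_self hx))
  have := abs_sub (u b * v b - u a * v a) (∫ x in a..b, u' x * v x)
  have := abs_sub (u b * v b) (u a * v a)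
  linarith

theorem abs_integral_sin_comp_div_le {φ h h' : ℝ → ℝ} (ha : 0 < a) (hab : a ≤ b)
    (hφ : ∀ s ∈ Icc a b, HasDerivAt φ (h s / s) s) (hh : ∀ s ∈ Icc a b, HasDerivAt h (h' s) s)
    (hh0 : ∀ s ∈ Icc a b, 0 < h s) (hh' : ∀ s ∈ Icc a b, 0 ≤ h' s) :
    |∫ s in a..b, Real.sin (φ s) / s| ≤ 2 / h a := by
  have hs0 : ∀ s ∈ Icc a b, s ≠ 0 := fun s hs => (ha.trans_le hs.1).ne'
  set w : ℝ → ℝ := fun s => h' s / h s ^ 2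
  have hw : ∀ s ∈ Icc a b, HasDerivAt (fun t => -(h t)⁻¹) (w s) s := fun s hs =>
    ((hh s hs).inv (hh0 s hs).ne').neg.congr_deriv (by rw [neg_div, neg_neg])
  have hw0 : ∀ s ∈ Icc a b, 0 ≤ w s := fun s hs => div_nonneg (hh' s hs) (sq_nonneg _)
  have hw_int : IntervalIntegrable w volume a b :=
    (intervalIntegrable_iff_integrableOn_Ioc_of_le hab).2 <| integrableOn_deriv_of_nonneg
      (continuousOn_of_forall_continuousAt fun s hs => (hw s hs).continuousAt)
      (fun s hs => hw s (Ioo_subset_Icc_self hs)) (fun s hs => hw0 s (Ioo_subset_Icc_self hs))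
  have hw_integral : ∫ s in a..b, w s = (h a)⁻¹ - (h b)⁻¹ := by
    rw [integral_eq_sub_of_hasDerivAt (by rwa [uIcc_of_le hab]) hw_int]; ring
  have hv : ∀ s ∈ Icc a b,
      HasDerivAt (fun t => -Real.cos (φ t)) (h s / s * Real.sin (φ s)) s := fun s hs =>
    (hφ s hs).cos.neg.congr_deriv (by ring)
  have hv_int : IntervalIntegrable (fun s => h s / s * Real.sin (φ s)) volume a b :=
    (continuousOn_of_forall_continuousAt fun s hs =>
      ((hh s hs).continuousAt.div continuousAt_id (hs0 s hs)).mul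
        (continuous_sin.continuousAt.comp (hφ s hs).continuousAt)).intervalIntegrable_of_Icc hab
  have hintegrand : ∫ s in a..b, Real.sin (φ s) / s
      = ∫ s in a..b, (h s)⁻¹ * (h s / s * Real.sin (φ s)) := by
    refine integral_congr fun s hs => ?_
    rw [uIcc_of_le hab] at hs
    have := (hh0 s hs).ne'
    field_simp
  have hvar : ∫ s in a..b, |-w s| = (h a)⁻¹ - (h b)⁻¹ := by
    rw [← hw_integral]
    refine integral_congr fun s hs => ?_
    rw [uIcc_of_le hab] at hs
    simp only [abs_neg, abs_of_nonneg (hw0 s hs)]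
  have hbound := abs_integral_mul_deriv_le (u := fun t => (h t)⁻¹) (u' := fun s => -w s) hab
    (fun s hs => ((hh s hs).inv (hh0 s hs).ne').congr_deriv (neg_div _ _)) hv hw_int.neg hv_int
    (fun s _ => by rw [abs_neg]; exact abs_cos_le_one _)
  rw [hintegrand]
  rw [hvar, abs_inv, abs_inv, abs_of_pos (hh0 a ⟨le_rfl, hab⟩),
    abs_of_pos (hh0 b ⟨hab, le_rfl⟩)] at hbound
  linarith [div_eq_mul_inv 2 (h a)]

end ByParts

section Phase

variable {K p s ξ₀ ξ : ℝ}

theorem sqrt_one_add_mul_rpow_neg_le (hK : 0 ≤ K) (hs : 0 < s) :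
    √(1 + K * s ^ (-p)) ≤ 1 + √K * s ^ (-(p / 2)) := by
  have hsq : (√K * s ^ (-(p / 2))) ^ 2 = K * s ^ (-p) := by
    rw [mul_pow, sq_sqrt hK, ← rpow_natCast, ← rpow_mul hs.le]
    norm_num
  rw [sqrt_le_iff]
  constructor
  · positivity
  · nlinarith [mul_nonneg (sqrt_nonneg K) (rpow_nonneg hs.le (-(p / 2)))]

theorem intervalIntegrable_sqrt_one_add_mul_rpow_neg (hK : 0 ≤ K) (hp : p < 2) (hs : 0 ≤ s) :
    IntervalIntegrable (fun x => √(1 + K * x ^ (-p))) volume 0 s := by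
  refine ((intervalIntegrable_const (c := 1)).add
    ((intervalIntegrable_rpow' (r := -(p / 2)) (by linarith)).const_mul √K)).mono_fun'
    (by fun_prop) ?_
  rw [uIoc_of_le hs, EventuallyLE, ae_restrict_iff' measurableSet_Ioc]
  refine Eventually.of_forall fun x hx => ?_
  rw [Real.norm_eq_abs, abs_of_nonneg (sqrt_nonneg _)]
  exact sqrt_one_add_mul_rpow_neg_le hK hx.1

theorem hasDerivAt_integral_sqrt_one_add_mul_rpow_neg (hK : 0 ≤ K) (hp : p < 2) (hs : 0 < s) :
    HasDerivAt (fun t => ∫ x in (0 : ℝ)..t, √(1 + K * x ^ (-p))) (√(1 + K * s ^ (-p))) s :=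
  integral_hasDerivAt_right (intervalIntegrable_sqrt_one_add_mul_rpow_neg hK hp hs.le)
    (by fun_prop : Measurable _).stronglyMeasurable.stronglyMeasurableAtFilter
    (by fun_prop (disch := exact Or.inl hs.ne'))

theorem mul_sqrt_one_add_mul_rpow_neg (hs : 0 < s) :
    s * √(1 + K * s ^ (-p)) = √(s ^ 2 + K * s ^ (2 - p)) := by
  rw [← sqrt_sq hs.le, ← sqrt_mul (sq_nonneg s), sqrt_sq hs.le, sub_eq_add_neg,
    rpow_add hs, rpow_two]
  ring_nf

theorem hasDerivAt_sqrt_sq_add_mul_rpow (hK : 0 ≤ K) (hs : 0 < s) :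
    HasDerivAt (fun t => √(t ^ 2 + K * t ^ (2 - p)))
      ((2 * s + K * ((2 - p) * s ^ (2 - p - 1))) / (2 * √(s ^ 2 + K * s ^ (2 - p)))) s := by
  have hpos : 0 < s ^ 2 + K * s ^ (2 - p) := by positivity
  simpa using ((hasDerivAt_pow 2 s).add
    ((hasDerivAt_rpow_const (p := 2 - p) (Or.inl hs.ne')).const_mul K)).sqrt hpos.ne'

theorem abs_integral_sin_phase_div_le_of_pos (hK : 0 ≤ K) (hp : p < 2) {a : ℝ} (ha : 0 < a)
    (γ : ℝ) (hξ₀ : 0 < ξ₀) (hle : ξ₀ ≤ ξ) :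
    |∫ s in ξ₀..ξ, Real.sin (a * (∫ x in (0 : ℝ)..s, √(1 + K * x ^ (-p))) + γ) / s|
      ≤ 2 / (a * ξ₀) := by
  set h : ℝ → ℝ := fun s => a * √(s ^ 2 + K * s ^ (2 - p))
  have hs0 : ∀ s ∈ Icc ξ₀ ξ, 0 < s := fun s hs => hξ₀.trans_le hs.1
  have hh0 : ∀ s ∈ Icc ξ₀ ξ, 0 < h s := fun s hs => by
    have := hs0 s hs
    positivity
  have hφ : ∀ s ∈ Icc ξ₀ ξ, HasDerivAt (fun t => a * (∫ x in (0 : ℝ)..t, √(1 + K * x ^ (-p))) + γ)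
      (h s / s) s := fun s hs => by
    refine ((hasDerivAt_integral_sqrt_one_add_mul_rpow_neg hK hp (hs0 s hs)).const_mul a).add_const
      γ |>.congr_deriv ?_
    simp only [h]
    rw [← mul_sqrt_one_add_mul_rpow_neg (hs0 s hs)]
    field_simp [(hs0 s hs).ne']
  have hh : ∀ s ∈ Icc ξ₀ ξ, HasDerivAt h _ s := fun s hs =>
    (hasDerivAt_sqrt_sq_add_mul_rpow hK (hs0 s hs)).const_mul a
  have hh' : ∀ s ∈ Icc ξ₀ ξ,
      0 ≤ a * ((2 * s + K * ((2 - p) * s ^ (2 - p - 1))) / (2 * √(s ^ 2 + K * s ^ (2 - p)))) :=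
    fun s hs => by
      have := hs0 s hs
      have : 0 ≤ 2 - p := by linarith
      positivity
  have hhξ₀ : a * ξ₀ ≤ h ξ₀ := by
    refine mul_le_mul_of_nonneg_left ?_ ha.le
    calc ξ₀ = √(ξ₀ ^ 2) := (sqrt_sq hξ₀.le).symm
      _ ≤ _ := sqrt_le_sqrt (by have := rpow_nonneg hξ₀.le (2 - p); nlinarith)
  calc _ ≤ 2 / h ξ₀ := abs_integral_sin_comp_div_le hξ₀ hle hφ hh hh0 hh'
    _ ≤ 2 / (a * ξ₀) := div_le_div_of_nonneg_left zero_le_two (by positivity) hhξ₀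

theorem abs_integral_sin_phase_div_le (hK : 0 ≤ K) (hp : p < 2) {a : ℝ} (ha : a ≠ 0)
    (γ : ℝ) (hξ₀ : 0 < ξ₀) (hle : ξ₀ ≤ ξ) :
    |∫ s in ξ₀..ξ, Real.sin (a * (∫ x in (0 : ℝ)..s, √(1 + K * x ^ (-p))) + γ) / s|
      ≤ 2 / (|a| * ξ₀) := by
  rcases ha.lt_or_gt with ha | ha
  · have hflip : ∀ s : ℝ, Real.sin (a * (∫ x in (0 : ℝ)..s, √(1 + K * x ^ (-p))) + γ) / s
        = -(Real.sin (-a * (∫ x in (0 : ℝ)..s, √(1 + K * x ^ (-p))) + -γ) / s) := fun s => by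
      rw [← neg_div, ← Real.sin_neg]; ring_nf
    simp only [hflip, intervalIntegral.integral_neg, abs_neg, abs_of_neg ha]
    exact abs_integral_sin_phase_div_le_of_pos hK hp (neg_pos.2 ha) (-γ) hξ₀ hle
  · rw [abs_of_pos ha]
    exact abs_integral_sin_phase_div_le_of_pos hK hp ha γ hξ₀ hle

end Phase

theorem stmt4_general (α : ℝ) (hα0 : 0 < α)
    (a : ℝ) (ha : a ≠ 0) (γ : ℝ) (E : ℝ) (hE : 0 < E)
    (c : ℝ) (hc : c = (1 + α / 2) ^ ((2 : ℝ) / (2 + α)))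
    (β : ℝ → ℝ) (hβ : ∀ x : ℝ, β x = -E / (c ^ α * x ^ (2 * α / (2 + α)))) :
    ∃ ε > (0 : ℝ), ∃ C > (0 : ℝ), ∃ ξstar : ℝ, 1 ≤ ξstar ∧
      ∀ ξ₀ ξ : ℝ, ξstar < ξ₀ → ξ₀ < ξ →
        |∫ s in ξ₀..ξ,
            Real.sin (a * (∫ x in (0 : ℝ)..s, Real.sqrt (1 - β x)) + γ) / s|
          ≤ C * ξ₀ ^ (-ε) := by
  set p := 2 * α / (2 + α)
  set K := E / c ^ α
  have hc0 : 0 < c := hc ▸ by positivity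
  have hK : 0 ≤ K := div_nonneg hE.le (rpow_nonneg hc0.le α)
  have hp : p < 2 := by rw [div_lt_iff₀ (by linarith)]; linarith
  have hβK : ∀ x > 0, 1 - β x = 1 + K * x ^ (-p) := fun x hx => by
    rw [hβ, rpow_neg hx.le]; ring
  refine ⟨1, one_pos, 2 / |a|, by positivity, 1, le_rfl, fun ξ₀ ξ hξ₀ hξ => ?_⟩
  have hinner : ∀ s ≥ 0, ∫ x in (0 : ℝ)..s, √(1 - β x) = ∫ x in (0 : ℝ)..s, √(1 + K * x ^ (-p)) :=
    fun s hs => integral_congr_ae <| Eventually.of_forall fun x hx => by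
      rw [uIoc_of_le hs] at hx
      rw [hβK x hx.1]
  have hξ₀0 : 0 < ξ₀ := one_pos.trans hξ₀
  rw [integral_congr fun s hs => by
    rw [hinner s ((le_min hξ₀0.le (hξ₀0.trans hξ).le).trans hs.1)], rpow_neg_one]
  calc _ ≤ 2 / (|a| * ξ₀) := abs_integral_sin_phase_div_le hK hp ha γ hξ₀0 hξ.le
    _ = 2 / |a| * ξ₀⁻¹ := by ring

/-- Proposition 2.1, part 1: For `0 < α < 2`, `a ≠ 0`, `γ ∈ ℝ` and `E > 0`,
with `c = (1+α/2)^{2/(2+α)}` and `β_E(x) = -E/(c^α x^{2α/(2+α)})`, there are `ε > 0`, `C > 0`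
and `ξ* ≥ 1` such that for all `ξ > ξ₀ > ξ*`,
`|∫_{ξ₀}^{ξ} sin(a ∫₀^s √(1-β_E(x)) dx + γ)/s ds| ≤ C ξ₀^{-ε}`. -/
theorem stmt4 (α : ℝ) (hα0 : 0 < α) (hα2 : α < 2)
    (a : ℝ) (ha : a ≠ 0) (γ : ℝ) (E : ℝ) (hE : 0 < E)
    (c : ℝ) (hc : c = (1 + α / 2) ^ ((2 : ℝ) / (2 + α)))
    (β : ℝ → ℝ) (hβ : ∀ x : ℝ, β x = -E / (c ^ α * x ^ (2 * α / (2 + α)))) :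
    ∃ ε > (0 : ℝ), ∃ C > (0 : ℝ), ∃ ξstar : ℝ, 1 ≤ ξstar ∧
      ∀ ξ₀ ξ : ℝ, ξstar < ξ₀ → ξ₀ < ξ →
        |∫ s in ξ₀..ξ,
            Real.sin (a * (∫ x in (0 : ℝ)..s, Real.sqrt (1 - β x)) + γ) / s|
          ≤ C * ξ₀ ^ (-ε) :=
  stmt4_general α hα0 a ha γ E hE c hc β hβ
end

section
/- Let 0 < α < 2, a ≠ 0, γ ∈ ℝ, and let E₁, E₂ > 0 with E₁ ≠ E₂, and let σ ∈ {+1, -1}. Then there exist constants ε > 0, C > 0 and ξ* ≥ 1 such that for all ξ > ξ₀ > ξ*, |∫_{ξ₀}^{ξ} sin( a ∫₀^{s} √(1 - β_{E₁}(x)) dx + σ a ∫₀^{s} √(1 - β_{E₂}(x)) dx + γ ) / s ds| ≤ C ξ₀^{-ε}. -/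
/-!
Let `p = 2α/(2+α) ∈ (0, 1)` and `κᵢ = Eᵢ / c^α`, so that `√(1 - β_{Eᵢ}(x)) = √(1 + κᵢ / x^p)`.
The phase `φ` inside the sine satisfies `s φ'(s) = a s (g₁(s) + σ g₂(s))` with
`gᵢ(s) = √(1 + κᵢ / s^p)`. Writing `sin φ / s = (s φ')⁻¹ · (sin φ) φ'` and integrating by parts,
the integral over `[ξ₀, ξ]` is at most `2 / |ξ₀ φ'(ξ₀)|` as soon as `s φ'` has the form `C · X(s)`
with `X` positive and increasing: the total variation of `(s φ')⁻¹` then telescopes.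
For `σ = 1`, `X(s) = s (g₁ + g₂) ≥ 2s`. For `σ = -1`, rationalising the difference gives
`s (g₁ - g₂) = (κ₁ - κ₂) s^(1-p) / (g₁ + g₂)`, and `g₁ + g₂` is decreasing and bounded on `[1, ∞)`;
since `E₁ ≠ E₂` this yields the decay `ξ₀^(-(1-p))`.
-/

open Filter Set MeasureTheory Real

section Oscillatory

variable {φ φ' h : ℝ → ℝ} {a b : ℝ}

theorem AntitoneOn.deriv_nonpos_of_mem_Ioc (hh : AntitoneOn h (Icc a b))
    {x : ℝ} (hx : x ∈ Ioc a b) (hd : DifferentiableAt ℝ h x) : deriv h x ≤ 0 := by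
  rw [← hd.derivWithin (uniqueDiffOn_Icc (hx.1.trans_le hx.2) x (Ioc_subset_Icc_self hx))]
  exact hh.derivWithin_nonpos

theorem AntitoneOn.intervalIntegrable_deriv (hab : a ≤ b) (hh : AntitoneOn h (Icc a b))
    (hd : ∀ x ∈ Icc a b, DifferentiableAt ℝ h x) : IntervalIntegrable (deriv h) volume a b := by
  have hneg : IntervalIntegrable (fun x => -deriv h x) volume a b := by
    refine intervalIntegral.intervalIntegrable_deriv_of_nonneg (g := fun x => -h x) ?_ ?_ ?_
    · rw [uIcc_of_le hab]
      exact fun x hx => (hd x hx).continuousAt.neg.continuousWithinAt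
    · simp only [min_eq_left hab, max_eq_right hab]
      exact fun x hx => (hd x (Ioo_subset_Icc_self hx)).hasDerivAt.neg
    · simp only [min_eq_left hab, max_eq_right hab]
      exact fun x hx => neg_nonneg.2 <|
        hh.deriv_nonpos_of_mem_Ioc (Ioo_subset_Ioc_self hx) (hd x (Ioo_subset_Icc_self hx))
  simpa [Pi.neg_def] using hneg.neg

theorem AntitoneOn.abs_integral_deriv_mul_le {v : ℝ → ℝ} (hab : a ≤ b)
    (hh : AntitoneOn h (Icc a b)) (hd : ∀ x ∈ Icc a b, DifferentiableAt ℝ h x)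
    (hv : ∀ x ∈ Icc a b, |v x| ≤ 1) :
    |∫ x in a..b, deriv h x * v x| ≤ h a - h b := by
  have hint := hh.intervalIntegrable_deriv hab hd
  have hbound : ∀ x ∈ Ioc a b, ‖deriv h x * v x‖ ≤ -deriv h x := fun x hx => by
    rw [norm_mul, Real.norm_eq_abs, Real.norm_eq_abs,
      abs_of_nonpos (hh.deriv_nonpos_of_mem_Ioc hx (hd x (Ioc_subset_Icc_self hx)))]
    exact mul_le_of_le_one_right (neg_nonneg.2 (hh.deriv_nonpos_of_mem_Ioc hx
      (hd x (Ioc_subset_Icc_self hx)))) (hv x (Ioc_subset_Icc_self hx))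
  calc |∫ x in a..b, deriv h x * v x|
      ≤ ∫ x in a..b, -deriv h x :=
        intervalIntegral.norm_integral_le_of_norm_le hab (Eventually.of_forall hbound) hint.neg
    _ = h a - h b := by
        rw [intervalIntegral.integral_neg, intervalIntegral.integral_deriv_eq_sub
          (by rwa [uIcc_of_le hab]) hint, neg_sub]

theorem AntitoneOn.abs_integral_mul_sin_comp_mul_deriv_le (hab : a ≤ b)
    (hφ : ∀ x ∈ Icc a b, HasDerivAt φ (φ' x) x) (hφ' : IntervalIntegrable φ' volume a b)
    (hh : AntitoneOn h (Icc a b)) (hd : ∀ x ∈ Icc a b, DifferentiableAt ℝ h x) (hb : 0 ≤ h b) :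
    |∫ x in a..b, h x * (sin (φ x) * φ' x)| ≤ 2 * h a := by
  have ha : h b ≤ h a := hh (left_mem_Icc.2 hab) (right_mem_Icc.2 hab) hab
  rw [← uIcc_of_le hab] at hφ hd
  rw [intervalIntegral.integral_mul_deriv_eq_deriv_mul (u := h) (v := fun x => -cos (φ x))
    (fun x hx => (hd x hx).hasDerivAt) (fun x hx => by simpa using ((hφ x hx).cos).fun_neg)
    (hh.intervalIntegrable_deriv hab (by rwa [← uIcc_of_le hab])) ?_]
  · have hcos : ∀ x, |-cos (φ x)| ≤ 1 := fun x => by rw [abs_neg]; exact abs_cos_le_one _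
    have hrem := hh.abs_integral_deriv_mul_le hab (by rwa [← uIcc_of_le hab])
      (fun x _ => hcos x)
    have hb' : |h b * -cos (φ b)| ≤ h b := by
      rw [abs_mul, abs_of_nonneg hb]
      exact mul_le_of_le_one_right hb (hcos _)
    have ha' : |h a * -cos (φ a)| ≤ h a := by
      rw [abs_mul, abs_of_nonneg (hb.trans ha)]
      exact mul_le_of_le_one_right (hb.trans ha) (hcos _)
    calc _ ≤ |h b * -cos (φ b)| + |h a * -cos (φ a)| + |∫ x in a..b, deriv h x * -cos (φ x)| :=
          (abs_sub _ _).trans (add_le_add_left (abs_sub _ _) _)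
      _ ≤ 2 * h a := by linarith
  · exact hφ'.continuousOn_mul fun x hx =>
      (continuous_sin.continuousAt.comp (hφ x hx).continuousAt).continuousWithinAt

theorem abs_integral_sin_div_le_of_mul_deriv_eq {ψ X : ℝ → ℝ} {C : ℝ} (ha : 0 < a)
    (hab : a ≤ b) (hC : C ≠ 0) (hφ : ∀ x ∈ Icc a b, HasDerivAt φ (ψ x) x)
    (hψ : ∀ x ∈ Icc a b, x * ψ x = C * X x) (hX : MonotoneOn X (Icc a b)) (hXa : 0 < X a)
    (hXd : ∀ x ∈ Icc a b, DifferentiableAt ℝ X x) :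
    |∫ x in a..b, sin (φ x) / x| ≤ 2 / (|C| * X a) := by
  wlog hCpos : 0 < C generalizing φ ψ C
  · have key := this (φ := fun x => -φ x) (ψ := fun x => -ψ x) (C := -C) (neg_ne_zero.2 hC)
      (fun x hx => (hφ x hx).neg) (fun x hx => by rw [mul_neg, hψ x hx, neg_mul])
      (neg_pos.2 (lt_of_le_of_ne (not_lt.1 hCpos) hC))
    simpa only [sin_neg, neg_div, intervalIntegral.integral_neg, abs_neg] using key
  have hXpos : ∀ x ∈ Icc a b, 0 < X x := fun x hx =>
    hXa.trans_le (hX (left_mem_Icc.2 hab) hx hx.1)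
  have hxpos : ∀ x ∈ Icc a b, 0 < x := fun x hx => ha.trans_le hx.1
  have hψeq : ∀ x ∈ Icc a b, ψ x = C * X x / x := fun x hx => by
    rw [← hψ x hx, mul_div_cancel_left₀ _ (hxpos x hx).ne']
  have hψint : IntervalIntegrable ψ volume a b := by
    refine ContinuousOn.intervalIntegrable ?_
    rw [uIcc_of_le hab]
    refine ContinuousOn.congr (f := fun x => C * X x / x) ?_ hψeq
    exact fun x hx => ((continuousAt_const.mul (hXd x hx).continuousAt).div continuousAt_id
      (hxpos x hx).ne').continuousWithinAt
  have hanti : AntitoneOn (fun x => (C * X x)⁻¹) (Icc a b) := fun x hx y hy hxy =>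
    inv_anti₀ (mul_pos hCpos (hXpos x hx)) (mul_le_mul_of_nonneg_left (hX hx hy hxy) hCpos.le)
  have hbound := hanti.abs_integral_mul_sin_comp_mul_deriv_le hab hφ hψint
    (fun x hx => ((hXd x hx).const_mul C).inv (mul_pos hCpos (hXpos x hx)).ne')
    (inv_nonneg.2 (mul_pos hCpos (hXpos b (right_mem_Icc.2 hab))).le)
  rw [abs_of_pos hCpos, div_eq_mul_inv]
  convert hbound using 2
  refine intervalIntegral.integral_congr fun x hx => ?_
  rw [uIcc_of_le hab] at hx
  rw [hψeq x hx]
  have := hXpos x hx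
  have := hxpos x hx
  field_simp

end Oscillatory

noncomputable def localFreq (κ p x : ℝ) : ℝ := √(1 + κ / x ^ p)

section LocalFreq

variable {κ p x : ℝ}

theorem one_le_localFreq (hκ : 0 ≤ κ) (hx : 0 ≤ x) : 1 ≤ localFreq κ p x :=
  one_le_sqrt.2 (le_add_of_nonneg_right (div_nonneg hκ (rpow_nonneg hx p)))

theorem antitoneOn_localFreq (hκ : 0 ≤ κ) (hp : 0 ≤ p) : AntitoneOn (localFreq κ p) (Ioi 0) :=
  fun _ hx _ _ hxy => sqrt_le_sqrt <| add_le_add_right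
    (div_le_div_of_nonneg_left hκ (rpow_pos_of_pos hx p) (rpow_le_rpow hx.le hxy hp)) 1

theorem localFreq_le_of_one_le (hκ : 0 ≤ κ) (hp : 0 ≤ p) (hx : 1 ≤ x) :
    localFreq κ p x ≤ √(1 + κ) := by
  simpa [localFreq] using antitoneOn_localFreq hκ hp (mem_Ioi.2 one_pos)
    (mem_Ioi.2 (one_pos.trans_le hx)) hx

theorem mul_localFreq_eq (hx : 0 < x) : x * localFreq κ p x = √(x ^ 2 + κ * x ^ (2 - p)) := by
  rw [localFreq, ← sqrt_sq hx.le, ← sqrt_mul (sq_nonneg x), sqrt_sq hx.le, rpow_sub hx,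
    rpow_two]
  congr 1
  field_simp

theorem monotoneOn_mul_localFreq (hκ : 0 ≤ κ) (hp : p ≤ 2) :
    MonotoneOn (fun x => x * localFreq κ p x) (Ioi 0) := fun x hx y hy hxy => by
  simp only [mul_localFreq_eq hx, mul_localFreq_eq hy]
  have h2p : 0 ≤ 2 - p := by linarith
  have hx₀ : 0 ≤ x := le_of_lt hx
  gcongr

theorem localFreq_sub_localFreq {κ₁ κ₂ : ℝ} (hκ₁ : 0 ≤ κ₁) (hκ₂ : 0 ≤ κ₂) (hx : 0 ≤ x) :
    localFreq κ₁ p x - localFreq κ₂ p x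
      = (κ₁ - κ₂) / x ^ p / (localFreq κ₁ p x + localFreq κ₂ p x) := by
  have h₁ := one_le_localFreq (p := p) hκ₁ hx
  have h₂ := one_le_localFreq (p := p) hκ₂ hx
  have hsq : ∀ κ, 0 ≤ κ → localFreq κ p x ^ 2 = 1 + κ / x ^ p := fun κ hκ =>
    sq_sqrt (by positivity)
  rw [eq_div_iff (by linarith)]
  linear_combination hsq κ₁ hκ₁ - hsq κ₂ hκ₂

theorem differentiableAt_localFreq (hκ : 0 ≤ κ) (hx : 0 < x) :
    DifferentiableAt ℝ (localFreq κ p) x := by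
  have hpos : 0 < x ^ p := rpow_pos_of_pos hx p
  refine DifferentiableAt.sqrt ?_ (by positivity)
  exact (differentiableAt_const _).add ((differentiableAt_const _).div
    (differentiableAt_id.rpow_const (Or.inl hx.ne')) hpos.ne')

theorem continuousOn_localFreq : ContinuousOn (localFreq κ p) (Ioi 0) := fun _ hy =>
  (continuous_sqrt.continuousAt.comp (continuousAt_const.add (continuousAt_const.div
    (continuousAt_id.rpow_const (Or.inl (ne_of_gt hy))) (rpow_pos_of_pos hy p).ne'))
    ).continuousWithinAt

theorem localFreq_le_one_add (hκ : 0 ≤ κ) (hx : 0 < x) :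
    localFreq κ p x ≤ 1 + √κ * x ^ (-(p / 2)) := by
  have hpow : (x ^ (-(p / 2))) ^ 2 = 1 / x ^ p := by
    rw [← rpow_natCast, ← rpow_mul hx.le, Nat.cast_ofNat, neg_mul, div_mul_cancel₀ p two_ne_zero,
      rpow_neg hx.le, one_div]
  have hκ' := sq_sqrt hκ
  rw [localFreq, sqrt_le_iff]
  refine ⟨by positivity, ?_⟩
  have hexp : (1 + √κ * x ^ (-(p / 2))) ^ 2 = 1 + 2 * √κ * x ^ (-(p / 2)) + κ / x ^ p := by
    rw [add_sq, mul_pow, hκ', hpow]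
    ring
  rw [hexp]
  linarith [mul_nonneg (sqrt_nonneg κ) (rpow_nonneg hx.le (-(p / 2)))]

theorem intervalIntegrable_localFreq (hκ : 0 ≤ κ) (hp : p < 2) {s : ℝ} (hs : 0 ≤ s) :
    IntervalIntegrable (localFreq κ p) volume 0 s := by
  have hdom : IntervalIntegrable (fun x => 1 + √κ * x ^ (-(p / 2))) volume 0 s :=
    intervalIntegrable_const.add
      ((intervalIntegral.intervalIntegrable_rpow' (by linarith)).const_mul _)
  rw [intervalIntegrable_iff_integrableOn_Ioc_of_le hs] at hdom ⊢
  refine hdom.mono' ((continuousOn_localFreq.mono fun x hx => hx.1).aestronglyMeasurable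
    measurableSet_Ioc) ((ae_restrict_iff' measurableSet_Ioc).2 (Eventually.of_forall ?_))
  intro x hx
  rw [Real.norm_eq_abs, abs_of_nonneg (zero_le_one.trans (one_le_localFreq hκ hx.1.le))]
  exact localFreq_le_one_add hκ hx.1

theorem hasDerivAt_integral_localFreq (hκ : 0 ≤ κ) (hp : p < 2) {s : ℝ} (hs : 0 < s) :
    HasDerivAt (fun t => ∫ x in (0 : ℝ)..t, localFreq κ p x) (localFreq κ p s) s :=
  intervalIntegral.integral_hasDerivAt_right (intervalIntegrable_localFreq hκ hp hs.le)
    (continuousOn_localFreq.stronglyMeasurableAtFilter isOpen_Ioi s hs)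
    (continuousOn_localFreq.continuousAt (Ioi_mem_nhds hs))

theorem monotoneOn_rpow_mul_inv_localFreq_add {κ₁ κ₂ : ℝ} (hκ₁ : 0 ≤ κ₁) (hκ₂ : 0 ≤ κ₂)
    (hp₀ : 0 ≤ p) (hp₁ : p ≤ 1) :
    MonotoneOn (fun x => x ^ (1 - p) * (localFreq κ₁ p x + localFreq κ₂ p x)⁻¹) (Ioi 0) := by
  have hsum : ∀ x ∈ Ioi (0 : ℝ), 0 < localFreq κ₁ p x + localFreq κ₂ p x := fun x hx => by
    linarith [one_le_localFreq (p := p) hκ₁ (le_of_lt hx),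
      one_le_localFreq (p := p) hκ₂ (le_of_lt hx)]
  refine MonotoneOn.mul (fun x hx y _ hxy => rpow_le_rpow (le_of_lt hx) hxy (by linarith))
    (fun x hx y hy hxy => inv_anti₀ (hsum y hy) (((antitoneOn_localFreq hκ₁ hp₀).add
      (antitoneOn_localFreq hκ₂ hp₀)) hx hy hxy))
    (fun x hx => rpow_nonneg (le_of_lt hx) _) (fun x hx => (inv_pos.2 (hsum x hx)).le)

theorem abs_integral_sin_div_le_of_deriv_localFreq_add {φ : ℝ → ℝ} {κ₁ κ₂ a ξ₀ ξ : ℝ} (hκ₁ : 0 ≤ κ₁)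
    (hκ₂ : 0 ≤ κ₂) (hp : p ≤ 2) (ha : a ≠ 0) (hξ₀ : 0 < ξ₀) (hξ : ξ₀ ≤ ξ)
    (hφ : ∀ x ∈ Icc ξ₀ ξ, HasDerivAt φ (a * (localFreq κ₁ p x + localFreq κ₂ p x)) x) :
    |∫ x in ξ₀..ξ, sin (φ x) / x| ≤ |a|⁻¹ * ξ₀⁻¹ := by
  have hpos : Icc ξ₀ ξ ⊆ Ioi 0 := fun x hx => hξ₀.trans_le hx.1
  have h₁ := one_le_localFreq (p := p) hκ₁ hξ₀.le
  have h₂ := one_le_localFreq (p := p) hκ₂ hξ₀.le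
  calc _ ≤ 2 / (|a| * (ξ₀ * localFreq κ₁ p ξ₀ + ξ₀ * localFreq κ₂ p ξ₀)) :=
        abs_integral_sin_div_le_of_mul_deriv_eq
          (X := fun x => x * localFreq κ₁ p x + x * localFreq κ₂ p x) hξ₀ hξ ha hφ
          (fun x _ => by ring)
          (((monotoneOn_mul_localFreq hκ₁ hp).add (monotoneOn_mul_localFreq hκ₂ hp)).mono hpos)
          (by nlinarith)
          (fun x hx => by
            have := differentiableAt_localFreq (p := p) hκ₁ (hpos hx)
            have := differentiableAt_localFreq (p := p) hκ₂ (hpos hx)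
            fun_prop)
    _ ≤ 2 / (|a| * (2 * ξ₀)) := by
        gcongr
        nlinarith
    _ = |a|⁻¹ * ξ₀⁻¹ := by
        field_simp

theorem abs_integral_sin_div_le_of_deriv_localFreq_sub {φ : ℝ → ℝ} {κ₁ κ₂ a ξ₀ ξ : ℝ} (hκ₁ : 0 ≤ κ₁)
    (hκ₂ : 0 ≤ κ₂) (hκ : κ₁ ≠ κ₂) (hp₀ : 0 ≤ p) (hp₁ : p ≤ 1) (ha : a ≠ 0) (hξ₀ : 1 ≤ ξ₀)
    (hξ : ξ₀ ≤ ξ)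
    (hφ : ∀ x ∈ Icc ξ₀ ξ, HasDerivAt φ (a * (localFreq κ₁ p x - localFreq κ₂ p x)) x) :
    |∫ x in ξ₀..ξ, sin (φ x) / x|
      ≤ 2 * (√(1 + κ₁) + √(1 + κ₂)) / |a * (κ₁ - κ₂)| * ξ₀ ^ (-(1 - p)) := by
  have h0 : 0 < ξ₀ := zero_lt_one.trans_le hξ₀
  have hpos : Icc ξ₀ ξ ⊆ Ioi 0 := fun x hx => h0.trans_le hx.1
  have hS : ∀ x ∈ Icc ξ₀ ξ, 0 < localFreq κ₁ p x + localFreq κ₂ p x := fun x hx => by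
    linarith [one_le_localFreq (p := p) hκ₁ (hpos hx).le,
      one_le_localFreq (p := p) hκ₂ (hpos hx).le]
  calc _ ≤ 2 / (|a * (κ₁ - κ₂)| *
        (ξ₀ ^ (1 - p) * (localFreq κ₁ p ξ₀ + localFreq κ₂ p ξ₀)⁻¹)) := by
        refine abs_integral_sin_div_le_of_mul_deriv_eq
          (X := fun x => x ^ (1 - p) * (localFreq κ₁ p x + localFreq κ₂ p x)⁻¹) h0 hξ
          (mul_ne_zero ha (sub_ne_zero.2 hκ)) hφ (fun x hx => ?_)
          ((monotoneOn_rpow_mul_inv_localFreq_add hκ₁ hκ₂ hp₀ hp₁).mono hpos)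
          (mul_pos (rpow_pos_of_pos h0 _) (inv_pos.2 (hS ξ₀ (left_mem_Icc.2 hξ))))
          (fun x hx => ?_)
        · rw [← mul_assoc x, mul_comm x, mul_assoc, localFreq_sub_localFreq hκ₁ hκ₂ (hpos hx).le,
            rpow_sub (hpos hx), rpow_one]
          ring
        · exact (differentiableAt_id.rpow_const (Or.inl (hpos hx).ne')).mul
            (((differentiableAt_localFreq hκ₁ (hpos hx)).add
              (differentiableAt_localFreq hκ₂ (hpos hx))).inv (hS x hx).ne')
    _ = 2 * (localFreq κ₁ p ξ₀ + localFreq κ₂ p ξ₀) / |a * (κ₁ - κ₂)| * ξ₀ ^ (-(1 - p)) := by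
        rw [rpow_neg h0.le]
        field_simp
    _ ≤ _ := by
        gcongr
        · exact localFreq_le_of_one_le hκ₁ hp₀ hξ₀
        · exact localFreq_le_of_one_le hκ₂ hp₀ hξ₀

end LocalFreq

/-- Proposition 2.1, part 2: For `0 < α < 2`, `a ≠ 0`, `γ ∈ ℝ`,
distinct `E₁, E₂ > 0` and a sign `σ ∈ {+1, -1}`, with `c = (1+α/2)^{2/(2+α)}` and
`β_E(x) = -E/(c^α x^{2α/(2+α)})`, there are `ε > 0`, `C > 0` and `ξ* ≥ 1` such that for all
`ξ > ξ₀ > ξ*`,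
`|∫_{ξ₀}^{ξ} sin(a ∫₀^s √(1-β_{E₁}) + σ a ∫₀^s √(1-β_{E₂}) + γ)/s ds| ≤ C ξ₀^{-ε}`. -/
theorem stmt5 (α : ℝ) (hα0 : 0 < α) (hα2 : α < 2)
    (a : ℝ) (ha : a ≠ 0) (γ : ℝ)
    (E₁ E₂ : ℝ) (hE₁ : 0 < E₁) (hE₂ : 0 < E₂) (hE : E₁ ≠ E₂)
    (σ : ℝ) (hσ : σ = 1 ∨ σ = -1)
    (c : ℝ) (hc : c = (1 + α / 2) ^ ((2 : ℝ) / (2 + α)))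
    (β : ℝ → ℝ → ℝ) (hβ : ∀ e x : ℝ, β e x = -e / (c ^ α * x ^ (2 * α / (2 + α)))) :
    ∃ ε > (0 : ℝ), ∃ C > (0 : ℝ), ∃ ξstar : ℝ, 1 ≤ ξstar ∧
      ∀ ξ₀ ξ : ℝ, ξstar < ξ₀ → ξ₀ < ξ →
        |∫ s in ξ₀..ξ,
            Real.sin (a * (∫ x in (0 : ℝ)..s, Real.sqrt (1 - β E₁ x))
              + σ * a * (∫ x in (0 : ℝ)..s, Real.sqrt (1 - β E₂ x)) + γ) / s|
          ≤ C * ξ₀ ^ (-ε) := by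
  set p := 2 * α / (2 + α) with hp
  have hp₀ : 0 ≤ p := by positivity
  have hp₁ : p < 1 := by rw [hp, div_lt_one (by linarith)]; linarith
  have hA : 0 < c ^ α := rpow_pos_of_pos (by rw [hc]; positivity) α
  have hβ' : ∀ e, (fun x => √(1 - β e x)) = localFreq (e / c ^ α) p := fun e => funext fun x => by
    rw [hβ, neg_div, sub_neg_eq_add, localFreq, div_div]
  simp only [hβ']
  have hκ₁ : 0 ≤ E₁ / c ^ α := by positivity
  have hκ₂ : 0 ≤ E₂ / c ^ α := by positivity
  have hφ : ∀ x ∈ Ioi (0 : ℝ), HasDerivAt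
      (fun s => a * (∫ x in (0 : ℝ)..s, localFreq (E₁ / c ^ α) p x)
        + σ * a * (∫ x in (0 : ℝ)..s, localFreq (E₂ / c ^ α) p x) + γ)
      (a * localFreq (E₁ / c ^ α) p x + σ * a * localFreq (E₂ / c ^ α) p x) x := fun x hx =>
    (((hasDerivAt_integral_localFreq hκ₁ (by linarith) hx).const_mul a).add
      ((hasDerivAt_integral_localFreq hκ₂ (by linarith) hx).const_mul (σ * a))).add_const γ
  have hpos : ∀ {ξ₀ ξ : ℝ}, 1 < ξ₀ → Icc ξ₀ ξ ⊆ Ioi 0 := fun h₀ _ hx =>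
    zero_lt_one.trans (h₀.trans_le hx.1)
  rcases hσ with rfl | rfl
  · refine ⟨1, one_pos, |a|⁻¹, by positivity, 1, le_rfl, fun ξ₀ ξ hξ₀ hξ => ?_⟩
    rw [rpow_neg_one]
    exact abs_integral_sin_div_le_of_deriv_localFreq_add (p := p) hκ₁ hκ₂ (by linarith) ha
      (zero_lt_one.trans hξ₀) hξ.le fun x hx => (hφ x (hpos hξ₀ hx)).congr_deriv (by ring)
  · have hκ : E₁ / c ^ α ≠ E₂ / c ^ α := fun h => hE ((div_left_inj' hA.ne').1 h)
    have hC : a * (E₁ / c ^ α - E₂ / c ^ α) ≠ 0 := mul_ne_zero ha (sub_ne_zero.2 hκ)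
    refine ⟨1 - p, by linarith, _, by positivity, 1, le_rfl, fun ξ₀ ξ hξ₀ hξ =>
      abs_integral_sin_div_le_of_deriv_localFreq_sub hκ₁ hκ₂ hκ hp₀ hp₁.le ha hξ₀.le hξ.le
        fun x hx => (hφ x (hpos hξ₀ hx)).congr_deriv (by ring)⟩
end

section
/- For every integer N ≥ 1 there exist θ_1, …, θ_N ∈ [0,1) such that for all ξ > 0, |Σ_{j=1}^N sin(2jξ/N + 2πθ_j)| + |Σ_{j=1}^N cos(2jξ/N + 2πθ_j)| ≤ 4√( 2N ln(8(N+1)N) ). -/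
open Filter Set

namespace Stmt8Aux

noncomputable def eps (b : Bool) : ℝ := if b then 1 else -1

lemma abs_eps (b : Bool) : |eps b| = 1 := by cases b <;> simp [eps]

lemma sum_exp_eq (n : ℕ) (c : Fin n → ℝ) :
    ∑ σ : Fin n → Bool, Real.exp (∑ j, eps (σ j) * c j)
      = ∏ j, (Real.exp (c j) + Real.exp (-c j)) := by
  have h1 : ∀ j : Fin n, Real.exp (c j) + Real.exp (-c j)
      = ∑ b : Bool, Real.exp (eps b * c j) := by
    intro j
    simp [eps, Fintype.sum_bool, add_comm]
  symm
  calc ∏ j, (Real.exp (c j) + Real.exp (-c j))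
      = ∏ j, ∑ b : Bool, Real.exp (eps b * c j) :=
        Finset.prod_congr rfl fun j _ => h1 j
    _ = ∑ σ : Fin n → Bool, ∏ j, Real.exp (eps (σ j) * c j) := Fintype.prod_sum _
    _ = ∑ σ : Fin n → Bool, Real.exp (∑ j, eps (σ j) * c j) :=
        Finset.sum_congr rfl fun σ _ => (Real.exp_sum _ _).symm

lemma chernoff (n : ℕ) (hn : 1 ≤ n) (c : Fin n → ℝ) (hc : ∀ j, |c j| ≤ 1)
    (s : ℝ) (hs : 0 ≤ s) :
    ((Finset.univ.filter
        (fun σ : Fin n → Bool => s < ∑ j, eps (σ j) * c j)).card : ℝ)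
      ≤ 2 ^ n * Real.exp (-(s ^ 2 / (2 * n))) := by
  have hn' : (0:ℝ) < n := by exact_mod_cast hn
  set l := s / n with hl
  have hl0 : 0 ≤ l := div_nonneg hs hn'.le
  set B := Finset.univ.filter
      (fun σ : Fin n → Bool => s < ∑ j, eps (σ j) * c j) with hB
  have key : (B.card : ℝ) * Real.exp (l * s)
      ≤ ∑ σ : Fin n → Bool, Real.exp (∑ j, eps (σ j) * (l * c j)) := by
    have h1 : ∀ σ ∈ B, Real.exp (l * s) ≤ Real.exp (∑ j, eps (σ j) * (l * c j)) := by
      intro σ hσ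
      rw [hB, Finset.mem_filter] at hσ
      have : ∑ j, eps (σ j) * (l * c j) = l * ∑ j, eps (σ j) * c j := by
        rw [Finset.mul_sum]; exact Finset.sum_congr rfl fun j _ => by ring
      rw [this]
      exact Real.exp_le_exp.2 (mul_le_mul_of_nonneg_left hσ.2.le hl0)
    calc (B.card : ℝ) * Real.exp (l * s)
        ≤ ∑ σ ∈ B, Real.exp (∑ j, eps (σ j) * (l * c j)) := by
          simpa [nsmul_eq_mul] using Finset.card_nsmul_le_sum B _ _ h1
      _ ≤ ∑ σ : Fin n → Bool, Real.exp (∑ j, eps (σ j) * (l * c j)) :=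
          Finset.sum_le_sum_of_subset_of_nonneg (Finset.subset_univ _)
            (fun _ _ _ => (Real.exp_pos _).le)
  have prodbd : ∑ σ : Fin n → Bool, Real.exp (∑ j, eps (σ j) * (l * c j))
      ≤ 2 ^ n * Real.exp (n * l ^ 2 / 2) := by
    rw [sum_exp_eq n (fun j => l * c j)]
    calc ∏ j, (Real.exp (l * c j) + Real.exp (-(l * c j)))
        ≤ ∏ _j : Fin n, 2 * Real.exp (l ^ 2 / 2) := by
          apply Finset.prod_le_prod
          · intro j _; positivity
          · intro j _
            have h2 : Real.exp (l * c j) + Real.exp (-(l * c j))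
                = 2 * Real.cosh (l * c j) := by
              rw [Real.cosh_eq]; ring
            rw [h2]
            have h3 : Real.cosh (l * c j) ≤ Real.exp ((l * c j) ^ 2 / 2) :=
              Real.cosh_le_exp_half_sq _
            have h4 : (l * c j) ^ 2 ≤ l ^ 2 := by
              have := hc j
              have h5 : c j ^ 2 ≤ 1 := by
                rw [← one_pow 2]; exact sq_le_sq' (by linarith [abs_le.1 this]) (abs_le.1 this).2
              calc (l * c j) ^ 2 = l ^ 2 * c j ^ 2 := by ring
                _ ≤ l ^ 2 * 1 := by nlinarith [sq_nonneg l]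
                _ = l ^ 2 := by ring
            have h6 : Real.exp ((l * c j) ^ 2 / 2) ≤ Real.exp (l ^ 2 / 2) :=
              Real.exp_le_exp.2 (by linarith)
            linarith
      _ = 2 ^ n * Real.exp (n * l ^ 2 / 2) := by
          rw [Finset.prod_const, Finset.card_univ, Fintype.card_fin, mul_pow,
            ← Real.exp_nat_mul]
          ring_nf
  have hfin : (B.card : ℝ) ≤ 2 ^ n * Real.exp (n * l ^ 2 / 2 - l * s) := by
    have hexp : (0:ℝ) < Real.exp (l * s) := Real.exp_pos _
    rw [Real.exp_sub, ← mul_div_assoc, le_div_iff₀ hexp]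
    exact key.trans prodbd
  have harg : n * l ^ 2 / 2 - l * s = -(s ^ 2 / (2 * n)) := by
    rw [hl]; field_simp; ring
  rwa [harg] at hfin

lemma chernoff_abs (n : ℕ) (hn : 1 ≤ n) (c : Fin n → ℝ) (hc : ∀ j, |c j| ≤ 1)
    (s : ℝ) (hs : 0 ≤ s) :
    ((Finset.univ.filter
        (fun σ : Fin n → Bool => s < |∑ j, eps (σ j) * c j|)).card : ℝ)
      ≤ 2 * (2 ^ n * Real.exp (-(s ^ 2 / (2 * n)))) := by
  classical
  set B1 := Finset.univ.filter
      (fun σ : Fin n → Bool => s < ∑ j, eps (σ j) * c j) with hB1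
  set B2 := Finset.univ.filter
      (fun σ : Fin n → Bool => s < ∑ j, eps (σ j) * (-c j)) with hB2
  have hsub : Finset.univ.filter
      (fun σ : Fin n → Bool => s < |∑ j, eps (σ j) * c j|) ⊆ B1 ∪ B2 := by
    intro σ hσ
    rw [Finset.mem_filter] at hσ
    rcases abs_cases (∑ j, eps (σ j) * c j) with ⟨h, _⟩ | ⟨h, _⟩
    · refine Finset.mem_union_left _ ?_
      rw [hB1, Finset.mem_filter]
      refine ⟨Finset.mem_univ _, ?_⟩
      rw [← h]; exact hσ.2
    · refine Finset.mem_union_right _ ?_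
      rw [hB2, Finset.mem_filter]
      refine ⟨Finset.mem_univ _, ?_⟩
      have : ∑ j, eps (σ j) * (-c j) = -∑ j, eps (σ j) * c j := by
        rw [← Finset.sum_neg_distrib]
        exact Finset.sum_congr rfl fun j _ => by ring
      rw [this, ← h]; exact hσ.2
  have h1 := chernoff n hn c hc s hs
  have h2 := chernoff n hn (fun j => -c j) (fun j => by simpa using hc j) s hs
  have hcard := Finset.card_le_card hsub
  have hcard2 := Finset.card_union_le B1 B2
  have : ((Finset.univ.filter
      (fun σ : Fin n → Bool => s < |∑ j, eps (σ j) * c j|)).card : ℝ)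
      ≤ (B1.card : ℝ) + (B2.card : ℝ) := by
    exact_mod_cast le_trans (Nat.cast_le.2 hcard) (by exact_mod_cast Nat.cast_le.2 hcard2)
  linarith

lemma exists_good (N M : ℕ) (hN : 1 ≤ N) (hM : 2 ≤ M)
    (c d : ℕ → Fin N → ℝ) (hc : ∀ k j, |c k j| ≤ 1) (hd : ∀ k j, |d k j| ≤ 1)
    (s : ℝ) (hs : 0 ≤ s)
    (hexp : Real.exp (-(s ^ 2 / (2 * N))) ≤ 1 / (8 * M)) :
    ∃ σ : Fin N → Bool, ∀ k ≤ M,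
      |∑ j, eps (σ j) * c k j| ≤ s ∧ |∑ j, eps (σ j) * d k j| ≤ s := by
  classical
  by_contra hcon
  push_neg at hcon
  -- every σ lies in the union of bad sets
  have hsub : (Finset.univ : Finset (Fin N → Bool)) ⊆
      (Finset.range (M + 1)).biUnion (fun k =>
        Finset.univ.filter (fun σ : Fin N → Bool => s < |∑ j, eps (σ j) * c k j|)
        ∪ Finset.univ.filter (fun σ : Fin N → Bool => s < |∑ j, eps (σ j) * d k j|)) := by
    intro σ _
    obtain ⟨k, hk, hbad⟩ := hcon σ
    rw [Finset.mem_biUnion]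
    refine ⟨k, Finset.mem_range.2 (Nat.lt_succ_of_le hk), ?_⟩
    rcases le_or_gt (|∑ j, eps (σ j) * c k j|) s with h | h
    · exact Finset.mem_union_right _ (Finset.mem_filter.2 ⟨Finset.mem_univ _, hbad h⟩)
    · exact Finset.mem_union_left _ (Finset.mem_filter.2 ⟨Finset.mem_univ _, h⟩)
  have hMpos : (0:ℝ) < M := by exact_mod_cast lt_of_lt_of_le Nat.zero_lt_two hM
  have hcardk : ∀ k : ℕ,
      (((Finset.univ.filter (fun σ : Fin N → Bool => s < |∑ j, eps (σ j) * c k j|)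
        ∪ Finset.univ.filter (fun σ : Fin N → Bool => s < |∑ j, eps (σ j) * d k j|)).card : ℝ))
      ≤ 2 ^ N / (2 * M) := by
    intro k
    have h1 := chernoff_abs N hN (c k) (hc k) s hs
    have h2 := chernoff_abs N hN (d k) (hd k) s hs
    have hcu := Finset.card_union_le
      (Finset.univ.filter (fun σ : Fin N → Bool => s < |∑ j, eps (σ j) * c k j|))
      (Finset.univ.filter (fun σ : Fin N → Bool => s < |∑ j, eps (σ j) * d k j|))
    have hcu' : ((Finset.univ.filter (fun σ : Fin N → Bool => s < |∑ j, eps (σ j) * c k j|)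
        ∪ Finset.univ.filter (fun σ : Fin N → Bool => s < |∑ j, eps (σ j) * d k j|)).card : ℝ)
        ≤ ((Finset.univ.filter (fun σ : Fin N → Bool => s < |∑ j, eps (σ j) * c k j|)).card : ℝ)
        + ((Finset.univ.filter (fun σ : Fin N → Bool => s < |∑ j, eps (σ j) * d k j|)).card : ℝ) := by
      exact_mod_cast hcu
    have hee : 2 * ((2:ℝ) ^ N * Real.exp (-(s ^ 2 / (2 * N)))) ≤ 2 ^ N / (4 * M) := by
      have : (2:ℝ) ^ N * Real.exp (-(s ^ 2 / (2 * N))) ≤ 2 ^ N * (1 / (8 * M)) :=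
        mul_le_mul_of_nonneg_left hexp (by positivity)
      calc 2 * ((2:ℝ) ^ N * Real.exp (-(s ^ 2 / (2 * N))))
          ≤ 2 * ((2:ℝ) ^ N * (1 / (8 * M))) := by linarith
        _ = 2 ^ N / (4 * M) := by field_simp; ring
    calc _ ≤ _ := hcu'
      _ ≤ 2 ^ N / (4 * M) + 2 ^ N / (4 * M) := by linarith [h1.trans hee, h2.trans hee]
      _ = 2 ^ N / (2 * M) := by field_simp; ring
  have hbig : ((2:ℝ) ^ N) ≤ (M + 1) * (2 ^ N / (2 * M)) := by
    have hc1 : ((Finset.univ : Finset (Fin N → Bool)).card : ℝ) = 2 ^ N := by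
      rw [Finset.card_univ, Fintype.card_fun]
      simp
    have hc2 := Finset.card_le_card hsub
    have hc3 := Finset.card_biUnion_le (s := Finset.range (M + 1)) (t := fun k =>
        Finset.univ.filter (fun σ : Fin N → Bool => s < |∑ j, eps (σ j) * c k j|)
        ∪ Finset.univ.filter (fun σ : Fin N → Bool => s < |∑ j, eps (σ j) * d k j|))
    have hc4 : ((2:ℝ) ^ N) ≤ ∑ k ∈ Finset.range (M + 1),
        (((Finset.univ.filter (fun σ : Fin N → Bool => s < |∑ j, eps (σ j) * c k j|)
        ∪ Finset.univ.filter (fun σ : Fin N → Bool => s < |∑ j, eps (σ j) * d k j|)).card : ℝ)) := by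
      rw [← hc1]
      exact_mod_cast le_trans (Nat.cast_le.2 hc2) (by exact_mod_cast Nat.cast_le.2 hc3)
    calc ((2:ℝ) ^ N) ≤ _ := hc4
      _ ≤ ∑ _k ∈ Finset.range (M + 1), (2:ℝ) ^ N / (2 * M) :=
          Finset.sum_le_sum fun k _ => hcardk k
      _ = (M + 1) * (2 ^ N / (2 * M)) := by
          rw [Finset.sum_const, Finset.card_range, nsmul_eq_mul]; push_cast; ring
  -- contradiction : (M+1)/(2M) < 1
  have hlt : ((M:ℝ) + 1) * ((2:ℝ) ^ N / (2 * (M:ℝ))) < 2 ^ N := by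
    have hM' : (2:ℝ) ≤ M := by exact_mod_cast hM
    have h2N : (0:ℝ) < 2 ^ N := by positivity
    rw [← mul_div_assoc, div_lt_iff₀ (by positivity : (0:ℝ) < 2 * (M:ℝ))]
    nlinarith
  linarith

lemma sin_lip (u v : ℝ) : |Real.sin u - Real.sin v| ≤ |u - v| := by
  rw [Real.sin_sub_sin, abs_mul, abs_mul]
  have h1 := Real.abs_sin_le_abs (x := (u - v) / 2)
  have h2 := Real.abs_cos_le_one ((u + v) / 2)
  have h3 : |(u - v) / 2| = |u - v| / 2 := by rw [abs_div]; norm_num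
  have h4 : |(2:ℝ)| = 2 := by norm_num
  rw [h4]
  nlinarith [abs_nonneg (Real.sin ((u - v) / 2)), abs_nonneg (u - v),
    abs_nonneg (Real.cos ((u + v) / 2))]

lemma cos_lip (u v : ℝ) : |Real.cos u - Real.cos v| ≤ |u - v| := by
  rw [Real.cos_sub_cos, abs_mul, abs_mul]
  have h1 := Real.abs_sin_le_abs (x := (u - v) / 2)
  have h2 := Real.abs_sin_le_one ((u + v) / 2)
  have h3 : |(u - v) / 2| = |u - v| / 2 := by rw [abs_div]; norm_num
  have h4 : |(-2:ℝ)| = 2 := by norm_num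
  rw [h4]
  nlinarith [abs_nonneg (Real.sin ((u - v) / 2)), abs_nonneg (u - v),
    abs_nonneg (Real.sin ((u + v) / 2))]

lemma gauss_sum (N : ℕ) : ∑ j : Fin N, ((j:ℝ) + 1) = N * (N + 1) / 2 := by
  rw [Fin.sum_univ_eq_sum_range (fun i => (i:ℝ) + 1) N]
  have h : (∑ i ∈ Finset.range (N + 1), i) = ∑ i ∈ Finset.range N, (i + 1) := by
    rw [Finset.sum_range_succ']
    simp
  have h2 := Finset.sum_range_id_mul_two (N + 1)
  rw [h] at h2
  simp only [Nat.add_sub_cancel] at h2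
  have h3 : ((∑ i ∈ Finset.range N, (i + 1) : ℕ) : ℝ) * 2 = (N + 1) * N := by
    exact_mod_cast congrArg (fun n : ℕ => (n : ℝ)) h2
  push_cast at h3 ⊢
  linarith

lemma sum_lip (N : ℕ) (hN : 1 ≤ N) (σ : Fin N → Bool) (w : ℝ → ℝ)
    (hw : ∀ u v : ℝ, |w u - w v| ≤ |u - v|) (x y : ℝ) :
    |(∑ j : Fin N, eps (σ j) * w (2 * ((j:ℕ) + 1 : ℝ) * x / N)) -
      ∑ j : Fin N, eps (σ j) * w (2 * ((j:ℕ) + 1 : ℝ) * y / N)|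
      ≤ ((N:ℝ) + 1) * |x - y| := by
  have hN0 : (0:ℝ) < N := by exact_mod_cast hN
  rw [← Finset.sum_sub_distrib]
  calc |∑ j : Fin N, (eps (σ j) * w (2 * ((j:ℕ) + 1 : ℝ) * x / N) -
          eps (σ j) * w (2 * ((j:ℕ) + 1 : ℝ) * y / N))|
      ≤ ∑ j : Fin N, |eps (σ j) * w (2 * ((j:ℕ) + 1 : ℝ) * x / N) -
          eps (σ j) * w (2 * ((j:ℕ) + 1 : ℝ) * y / N)| :=
        Finset.abs_sum_le_sum_abs _ _
    _ ≤ ∑ j : Fin N, 2 * ((j:ℕ) + 1 : ℝ) / N * |x - y| := by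
        apply Finset.sum_le_sum
        intro j _
        have he : eps (σ j) * w (2 * ((j:ℕ) + 1 : ℝ) * x / N) -
            eps (σ j) * w (2 * ((j:ℕ) + 1 : ℝ) * y / N)
            = eps (σ j) * (w (2 * ((j:ℕ) + 1 : ℝ) * x / N) -
              w (2 * ((j:ℕ) + 1 : ℝ) * y / N)) := by ring
        rw [he, abs_mul, abs_eps, one_mul]
        have harg : 2 * ((j:ℕ) + 1 : ℝ) * x / N - 2 * ((j:ℕ) + 1 : ℝ) * y / N
            = 2 * ((j:ℕ) + 1 : ℝ) / N * (x - y) := by ring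
        have := hw (2 * ((j:ℕ) + 1 : ℝ) * x / N) (2 * ((j:ℕ) + 1 : ℝ) * y / N)
        rw [harg] at this
        rw [abs_mul] at this
        have hpos : (0:ℝ) ≤ 2 * ((j:ℕ) + 1 : ℝ) / N := by positivity
        rwa [abs_of_nonneg hpos] at this
    _ = ((N:ℝ) + 1) * |x - y| := by
        rw [← Finset.sum_mul]
        congr 1
        have : ∑ j : Fin N, 2 * ((j:ℕ) + 1 : ℝ) / N
            = (∑ j : Fin N, ((j:ℕ) + 1 : ℝ)) * (2 / N) := by
          rw [Finset.sum_mul]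
          exact Finset.sum_congr rfl fun j _ => by ring
        rw [this, gauss_sum]
        field_simp

end Stmt8Aux

open Stmt8Aux in
set_option maxHeartbeats 1000000 in
/-- Lemma 4.2: for every `N ≥ 1` there are phases `θ_j ∈ [0,1)` such that for
all `ξ > 0`,
`|Σ_j sin(2jξ/N + 2πθ_j)| + |Σ_j cos(2jξ/N + 2πθ_j)| ≤ 4√(2N ln(8(N+1)N))`. -/
theorem stmt8 (N : ℕ) (hN : 1 ≤ N) :
    ∃ θ : Fin N → ℝ, (∀ j, θ j ∈ Ico (0 : ℝ) 1) ∧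
      ∀ ξ : ℝ, 0 < ξ →
        |∑ j : Fin N, Real.sin (2 * ((j : ℕ) + 1 : ℝ) * ξ / N + 2 * Real.pi * θ j)| +
        |∑ j : Fin N, Real.cos (2 * ((j : ℕ) + 1 : ℝ) * ξ / N + 2 * Real.pi * θ j)|
          ≤ 4 * Real.sqrt (2 * N * Real.log (8 * (N + 1) * N)) := by
  classical
  have hN0 : (0:ℝ) < N := by exact_mod_cast hN
  have hN1 : (1:ℝ) ≤ N := by exact_mod_cast hN
  have hNne : (N:ℝ) ≠ 0 := ne_of_gt hN0
  set L := Real.log (8 * ((N:ℝ) + 1) * N) with hLdef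
  have h16 : (16:ℝ) ≤ 8 * ((N:ℝ) + 1) * N := by nlinarith
  have hlog16 : (2.772:ℝ) ≤ Real.log 16 := by
    have h4 : (16:ℝ) = 2 ^ 4 := by norm_num
    rw [h4, Real.log_pow]
    push_cast
    nlinarith [Real.log_two_gt_d9]
  have hL : (2.772:ℝ) ≤ L := hlog16.trans (Real.log_le_log (by norm_num) h16)
  have hL0 : (0:ℝ) < L := lt_of_lt_of_le (by norm_num) hL
  set s := Real.sqrt (2 * (N:ℝ) * L) with hsdef
  have hs0 : (0:ℝ) ≤ s := Real.sqrt_nonneg _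
  have hs2 : s ^ 2 = 2 * N * L := Real.sq_sqrt (by positivity)
  set M := N * (N + 1) with hMdef
  have hM2 : 2 ≤ M := by
    have h := Nat.mul_le_mul hN (show 2 ≤ N + 1 by omega)
    omega
  have hMR : (M:ℝ) = N * ((N:ℝ) + 1) := by rw [hMdef]; push_cast; ring
  have hM0 : (0:ℝ) < M := by rw [hMR]; positivity
  have hMne : (M:ℝ) ≠ 0 := ne_of_gt hM0
  set p := Real.pi * N with hpdef
  have hp0 : (0:ℝ) < p := by rw [hpdef]; positivity
  set T : ℕ → ℝ := fun k => k * p / M with hTdef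
  have hexp : Real.exp (-(s ^ 2 / (2 * N))) ≤ 1 / (8 * M) := by
    have h1 : s ^ 2 / (2 * (N:ℝ)) = L := by rw [hs2]; field_simp
    rw [h1, Real.exp_neg, Real.exp_log (by linarith : (0:ℝ) < 8 * ((N:ℝ) + 1) * N)]
    rw [hMR, one_div]
    apply le_of_eq
    congr 1
    ring
  obtain ⟨σ, hσ⟩ := exists_good N M hN hM2
    (fun k j => Real.sin (2 * ((j:ℕ) + 1 : ℝ) * T k / N))
    (fun k j => Real.cos (2 * ((j:ℕ) + 1 : ℝ) * T k / N))
    (fun k j => Real.abs_sin_le_one _) (fun k j => Real.abs_cos_le_one _) s hs0 hexp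
  set F : ℝ → ℝ := fun x => ∑ j : Fin N, eps (σ j) * Real.sin (2 * ((j:ℕ) + 1 : ℝ) * x / N)
    with hFdef
  set G : ℝ → ℝ := fun x => ∑ j : Fin N, eps (σ j) * Real.cos (2 * ((j:ℕ) + 1 : ℝ) * x / N)
    with hGdef
  refine ⟨fun j => if σ j then 0 else 1/2, ?_, ?_⟩
  · intro j
    cases h : σ j <;> simp [h] <;> norm_num
  intro ξ hξ
  -- rewrite the sums
  have hsin : ∀ x : ℝ, (∑ j : Fin N, Real.sin (2 * ((j:ℕ) + 1 : ℝ) * x / N +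
      2 * Real.pi * (if σ j then 0 else 1/2))) = F x := by
    intro x
    apply Finset.sum_congr rfl
    intro j _
    cases hb : σ j with
    | false =>
        have h1 : (2 * Real.pi * if (false:Bool) = true then (0:ℝ) else 1/2) = Real.pi := by
          rw [if_neg (by simp)]; ring
        rw [h1, Real.sin_add_pi]
        simp [eps]
    | true =>
        have h1 : (2 * Real.pi * if (true:Bool) = true then (0:ℝ) else 1/2) = 0 := by
          rw [if_pos rfl]; ring
        rw [h1, add_zero]
        simp [eps]
  have hcos : ∀ x : ℝ, (∑ j : Fin N, Real.cos (2 * ((j:ℕ) + 1 : ℝ) * x / N +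
      2 * Real.pi * (if σ j then 0 else 1/2))) = G x := by
    intro x
    apply Finset.sum_congr rfl
    intro j _
    cases hb : σ j with
    | false =>
        have h1 : (2 * Real.pi * if (false:Bool) = true then (0:ℝ) else 1/2) = Real.pi := by
          rw [if_neg (by simp)]; ring
        rw [h1, Real.cos_add_pi]
        simp [eps]
    | true =>
        have h1 : (2 * Real.pi * if (true:Bool) = true then (0:ℝ) else 1/2) = 0 := by
          rw [if_pos rfl]; ring
        rw [h1, add_zero]
        simp [eps]
  rw [hsin ξ, hcos ξ]
  -- periodicity
  have hFper : Function.Periodic F p := by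
    intro x
    apply Finset.sum_congr rfl
    intro j _
    congr 1
    have harg : 2 * ((j:ℕ) + 1 : ℝ) * (x + p) / N
        = 2 * ((j:ℕ) + 1 : ℝ) * x / N + ((j:ℕ) + 1 : ℕ) * (2 * Real.pi) := by
      rw [hpdef]
      push_cast
      field_simp
    rw [harg, Real.sin_add_nat_mul_two_pi]
  have hGper : Function.Periodic G p := by
    intro x
    apply Finset.sum_congr rfl
    intro j _
    congr 1
    have harg : 2 * ((j:ℕ) + 1 : ℝ) * (x + p) / N
        = 2 * ((j:ℕ) + 1 : ℝ) * x / N + ((j:ℕ) + 1 : ℕ) * (2 * Real.pi) := by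
      rw [hpdef]
      push_cast
      field_simp
    rw [harg, Real.cos_add_nat_mul_two_pi]
  -- reduce to [0, p)
  set x := ξ - ⌊ξ / p⌋ * p with hxdef
  have hFx : F ξ = F x := (hFper.sub_int_mul_eq ⌊ξ / p⌋).symm
  have hGx : G ξ = G x := (hGper.sub_int_mul_eq ⌊ξ / p⌋).symm
  have hx0 : 0 ≤ x := Int.sub_floor_div_mul_nonneg ξ hp0
  have hxp : x < p := Int.sub_floor_div_mul_lt ξ hp0
  -- nearest net point
  set y := x * M / p with hydef
  have hy0 : 0 ≤ y := by positivity
  have hyM : y < M := by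
    rw [hydef, div_lt_iff₀ hp0]
    have h := mul_lt_mul_of_pos_right hxp hM0
    linarith
  set k' := round y with hk'def
  have hk'0 : 0 ≤ k' := by
    rw [hk'def, round_eq]
    exact Int.le_floor.2 (by push_cast; linarith)
  have hk'M : k' ≤ (M:ℤ) := by
    rw [hk'def, round_eq]
    have : (⌊y + 1/2⌋ : ℤ) < (M:ℤ) + 1 := Int.floor_lt.2 (by push_cast; linarith)
    omega
  set k := k'.toNat with hkdef
  have hkM : k ≤ M := by
    rw [hkdef]
    omega
  have hkR : ((k:ℕ) : ℝ) = ((k' : ℤ) : ℝ) := by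
    rw [hkdef]
    exact_mod_cast Int.toNat_of_nonneg hk'0
  have hnear : |x - T k| ≤ p / (2 * M) := by
    have h1 : x - T k = (y - (k' : ℝ)) * (p / M) := by
      simp only [hTdef, hydef]
      rw [hkR]
      field_simp
    rw [h1, abs_mul]
    have h2 : |y - (k' : ℝ)| ≤ 1/2 := by
      rw [hk'def]
      exact abs_sub_round y
    have h3 : |p / (M:ℝ)| = p / M := abs_of_nonneg (by positivity)
    rw [h3]
    calc |y - (k':ℝ)| * (p / M) ≤ 1/2 * (p / M) := by
          apply mul_le_mul_of_nonneg_right h2 (by positivity)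
      _ = p / (2 * M) := by ring
  -- bound each sum
  have hFk : |F (T k)| ≤ s := (hσ k hkM).1
  have hGk : |G (T k)| ≤ s := (hσ k hkM).2
  have hhalf : ((N:ℝ) + 1) * (p / (2 * M)) = Real.pi / 2 := by
    rw [hpdef, hMR]
    field_simp
  have hFbound : |F ξ| ≤ s + Real.pi / 2 := by
    rw [hFx]
    have h1 : |F x - F (T k)| ≤ ((N:ℝ) + 1) * |x - T k| := sum_lip N hN σ Real.sin sin_lip x (T k)
    have h2 : ((N:ℝ) + 1) * |x - T k| ≤ ((N:ℝ) + 1) * (p / (2 * M)) :=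
      mul_le_mul_of_nonneg_left hnear (by positivity)
    calc |F x| = |F (T k) + (F x - F (T k))| := by ring_nf
      _ ≤ |F (T k)| + |F x - F (T k)| := abs_add_le _ _
      _ ≤ s + Real.pi / 2 := by rw [← hhalf]; linarith
  have hGbound : |G ξ| ≤ s + Real.pi / 2 := by
    rw [hGx]
    have h1 : |G x - G (T k)| ≤ ((N:ℝ) + 1) * |x - T k| := sum_lip N hN σ Real.cos cos_lip x (T k)
    have h2 : ((N:ℝ) + 1) * |x - T k| ≤ ((N:ℝ) + 1) * (p / (2 * M)) :=
      mul_le_mul_of_nonneg_left hnear (by positivity)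
    calc |G x| = |G (T k) + (G x - G (T k))| := by ring_nf
      _ ≤ |G (T k)| + |G x - G (T k)| := abs_add_le _ _
      _ ≤ s + Real.pi / 2 := by rw [← hhalf]; linarith
  -- π ≤ 2s
  have hπ : Real.pi ≤ 2 * s := by
    have h3 : (1:ℝ) * 2.772 ≤ (N:ℝ) * L := mul_le_mul hN1 hL (by norm_num) (by linarith)
    have h4 : Real.pi / 2 ≤ s := by
      rw [hsdef]
      apply (Real.le_sqrt (by positivity) (by positivity)).2
      nlinarith [Real.pi_lt_d2, Real.pi_pos]
    linarith
  linarith [hFbound, hGbound, hπ]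
end

section
/- For all real numbers a and b, ∫₀^1 e^{a sin(b + 2πy)} dy ≤ e^{a²/4}. -/
/-!
After the substitution `θ = b + 2πy`, periodicity turns the left side into
`(2π)⁻¹ ∫_{-π}^{π} e^{a sin θ} dθ`. Expanding the exponential, this integral is
`∑ aⁿ/n! ∫_{-π}^{π} sinⁿ`; the odd moments vanish and, by Wallis' formula, the `2k`-th term is
`2π (a²/4)ᵏ/(k!)²`, which is at most `2π (a²/4)ᵏ/k!`, the `k`-th term of `2π e^{a²/4}`.
-/

open Real Nat intervalIntegral

theorem Function.Periodic.smul_intervalIntegral_comp_add_mul {E : Type*} [NormedAddCommGroup E]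
    [NormedSpace ℝ E] {f : ℝ → E} {T : ℝ} (hf : Function.Periodic f T) (b c : ℝ) :
    T • ∫ y in (0 : ℝ)..1, f (b + T * y) = ∫ x in c..c + T, f x := by
  rw [smul_integral_comp_add_mul, mul_zero, add_zero, mul_one, hf.intervalIntegral_add_eq]

theorem hasSum_intervalIntegral_exp_mul {g : ℝ → ℝ} (hg : Continuous g)
    (hg_le : ∀ x, |g x| ≤ 1) (a c d : ℝ) :
    HasSum (fun n : ℕ => a ^ n / n ! * ∫ x in c..d, g x ^ n) (∫ x in c..d, exp (a * g x)) := by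
  have hterm (n : ℕ) :
      a ^ n / n ! * ∫ x in c..d, g x ^ n = ∫ x in c..d, (a * g x) ^ n / n ! := by
    rw [← integral_const_mul]
    congr 1 with x
    ring
  simp only [hterm]
  refine hasSum_integral_of_dominated_convergence (fun n _ => |a| ^ n / n !)
    (fun n => (by fun_prop : Continuous fun x => (a * g x) ^ n / n !).aestronglyMeasurable)
    (fun n => .of_forall fun x _ => ?_) (.of_forall fun _ _ => summable_pow_div_factorial |a|)
    intervalIntegrable_const (.of_forall fun x _ => ?_)
  · rw [norm_div, norm_pow, norm_mul, norm_natCast, Real.norm_eq_abs, Real.norm_eq_abs]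
    gcongr
    exact mul_le_of_le_one_right (abs_nonneg a) (hg_le x)
  · exact exp_eq_exp_ℝ ▸ NormedSpace.expSeries_div_hasSum_exp (a * g x)

theorem integral_sin_pow_neg_pi_pi (n : ℕ) :
    ∫ x in -π..π, sin x ^ n = (1 + (-1) ^ n) * ∫ x in 0..π, sin x ^ n := by
  have hint (u v : ℝ) : IntervalIntegrable (fun x => sin x ^ n) MeasureTheory.volume u v :=
    (continuous_sin.pow n).intervalIntegrable u v
  have hneg : ∫ x in -π..0, sin x ^ n = (-1) ^ n * ∫ x in 0..π, sin x ^ n := by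
    have := integral_comp_neg (a := 0) (b := π) fun x => sin x ^ n
    simp_rw [sin_neg, neg_pow (sin _), neg_zero, integral_const_mul] at this
    exact this.symm
  rw [← integral_add_adjacent_intervals (hint (-π) 0) (hint 0 π), hneg]
  ring

theorem prod_range_two_mul_add_one_div_two_mul_add_two (k : ℕ) :
    ∏ i ∈ Finset.range k, (2 * (i : ℝ) + 1) / (2 * i + 2) =
      (2 * k)! / (4 ^ k * (k ! : ℝ) ^ 2) := by
  induction k with
  | zero => simp
  | succ k ih =>
    rw [Finset.prod_range_succ, ih, show 2 * (k + 1) = 2 * k + 1 + 1 by ring,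
      factorial_succ, factorial_succ, factorial_succ]
    push_cast
    field_simp
    ring

theorem pow_div_factorial_mul_integral_sin_pow_le (a : ℝ) (k : ℕ) :
    a ^ (2 * k) / (2 * k)! * ∫ x in -π..π, sin x ^ (2 * k) ≤
      2 * π * ((a ^ 2 / 4) ^ k / k !) := by
  calc a ^ (2 * k) / (2 * k)! * ∫ x in -π..π, sin x ^ (2 * k)
      = 2 * π * ((a ^ 2 / 4) ^ k / (k ! : ℝ) ^ 2) := by
        rw [integral_sin_pow_neg_pi_pi, integral_sin_pow_even,
          prod_range_two_mul_add_one_div_two_mul_add_two, pow_mul, div_pow,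
          (even_two_mul k).neg_one_pow]
        field_simp
        ring
    _ ≤ 2 * π * ((a ^ 2 / 4) ^ k / k !) := by
        gcongr
        exact le_self_pow₀ (mod_cast k.factorial_pos) two_ne_zero

/-- for all real `a, b`, `∫₀¹ e^{a sin(b + 2πy)} dy ≤ e^{a²/4}`. -/
theorem stmt9 (a b : ℝ) :
    ∫ y in (0 : ℝ)..1, Real.exp (a * Real.sin (b + 2 * Real.pi * y)) ≤ Real.exp (a ^ 2 / 4) := by
  have hmoments := hasSum_intervalIntegral_exp_mul continuous_sin abs_sin_le_one a (-π) π
  have heven : HasSum (fun k : ℕ => a ^ (2 * k) / (2 * k)! * ∫ x in -π..π, sin x ^ (2 * k))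
      (∫ x in -π..π, exp (a * sin x)) := by
    refine (Function.Injective.hasSum_iff (g := fun k : ℕ => 2 * k)
      (mul_right_injective₀ two_ne_zero) ?_).2 hmoments
    intro n hn
    obtain ⟨k, rfl⟩ : Odd n :=
      Nat.not_even_iff_odd.1 fun ⟨k, hk⟩ => hn ⟨k, show 2 * k = n by omega⟩
    rw [integral_sin_pow_neg_pi_pi, (odd_two_mul_add_one k).neg_one_pow]
    simp
  have hbound : ∫ x in -π..π, exp (a * sin x) ≤ 2 * π * exp (a ^ 2 / 4) :=
    hasSum_le (pow_div_factorial_mul_integral_sin_pow_le a) heven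
      ((exp_eq_exp_ℝ ▸ NormedSpace.expSeries_div_hasSum_exp (a ^ 2 / 4)).mul_left _)
  have hperiod :=
    (sin_periodic.comp fun s => exp (a * s)).smul_intervalIntegral_comp_add_mul b (-π)
  rw [show -π + 2 * π = π by ring, smul_eq_mul] at hperiod
  exact le_of_mul_le_mul_left (hperiod ▸ hbound) (by positivity)
end

section
/- Let N ≥ 1 and, for θ = (θ_1, …, θ_N) ∈ [0,1)^N, define f₁(ξ,θ) = Σ_{j=1}^N sin(2jξ/N + 2πθ_j). Then for every θ ∈ [0,1)^N, sup_{ξ ∈ [0, πN]} |f₁(ξ,θ)| ≥ 1/2. -/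
open Set

open intervalIntegral Real in
private lemma int_cos_lin (k e L : ℝ) (hk : k ≠ 0) :
    ∫ x in (0:ℝ)..L, Real.cos (k * x + e) = (Real.sin (k * L + e) - Real.sin e) / k := by
  rw [intervalIntegral.integral_comp_mul_add Real.cos hk e]
  simp [integral_cos, smul_eq_mul, div_eq_inv_mul, mul_comm]

open Real in
private lemma int_cos_per (m : ℕ) (e n : ℝ) (hn : 0 < n) (hm : 1 ≤ m) :
    ∫ x in (0:ℝ)..(Real.pi * n), Real.cos ((2 * m / n) * x + e) = 0 := by
  have hk : (2 * (m:ℝ) / n) ≠ 0 := by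
    have : (1:ℝ) ≤ (m:ℝ) := by exact_mod_cast hm
    positivity
  rw [int_cos_lin _ _ _ hk]
  have harg : (2 * (m:ℝ) / n) * (Real.pi * n) + e = e + (m:ℝ) * (2 * Real.pi) := by
    field_simp; ring
  rw [harg, Real.sin_add_nat_mul_two_pi, sub_self, zero_div]

private lemma sin_mul_sin (A B : ℝ) :
    Real.sin A * Real.sin B = (Real.cos (A - B) - Real.cos (A + B)) / 2 := by
  have h := Real.cos_sub_cos (A - B) (A + B)
  have h1 : (A - B + (A + B)) / 2 = A := by ring
  have h2 : (A - B - (A + B)) / 2 = -B := by ring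
  rw [h1, h2, Real.sin_neg] at h
  linarith

/-- for `N ≥ 1` and any `θ ∈ [0,1)^N`, the sup of
`|f₁(ξ,θ)| = |Σ_j sin(2jξ/N + 2πθ_j)|` over `ξ ∈ [0, πN]` is at least `1/2`. -/
theorem stmt10 (N : ℕ) (hN : 1 ≤ N) (θ : Fin N → ℝ) (hθ : ∀ j, θ j ∈ Ico (0 : ℝ) 1) :
    (1 / 2 : ℝ) ≤ sSup ((fun ξ : ℝ =>
      |∑ j : Fin N, Real.sin (2 * ((j : ℕ) + 1 : ℝ) * ξ / N + 2 * Real.pi * θ j)|) ''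
        Icc 0 (Real.pi * N)) := by
  have hn : (0:ℝ) < N := by exact_mod_cast hN
  set n : ℝ := (N : ℝ) with hn_def
  set L : ℝ := Real.pi * n with hL_def
  have hL : 0 < L := by positivity
  set f : ℝ → ℝ := fun x => ∑ j : Fin N, Real.sin (2 * ((j : ℕ) + 1 : ℝ) * x / n + 2 * Real.pi * θ j) with hf_def
  have hfc : Continuous f := by
    apply continuous_finset_sum
    intro j _
    exact Real.continuous_sin.comp (by fun_prop)
  set g : ℝ → ℝ := fun x => |f x| with hg_def
  have hgc : Continuous g := hfc.abs
  set M : ℝ := sSup (g '' Icc 0 L) with hM_def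
  have hbdd : BddAbove (g '' Icc 0 L) := (isCompact_Icc.image hgc).bddAbove
  have hle : ∀ x ∈ Icc (0:ℝ) L, g x ≤ M := fun x hx => le_csSup hbdd (mem_image_of_mem g hx)
  -- test function: the j = 0 term
  set j0 : Fin N := ⟨0, hN⟩ with hj0
  set w : ℝ → ℝ := fun x => Real.sin (2 * x / n + 2 * Real.pi * θ j0) with hw_def
  have hwc : Continuous w := Real.continuous_sin.comp (by fun_prop)
  -- compute the term integrals
  have hterm : ∀ j : Fin N,
      (∫ x in (0:ℝ)..L, Real.sin (2 * ((j : ℕ) + 1 : ℝ) * x / n + 2 * Real.pi * θ j) * w x)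
        = if j = j0 then L / 2 else 0 := by
    intro j
    have hrw : ∀ x : ℝ,
        Real.sin (2 * ((j : ℕ) + 1 : ℝ) * x / n + 2 * Real.pi * θ j) * w x
          = (Real.cos ((2 * (j:ℕ) / n) * x + (2 * Real.pi * θ j - 2 * Real.pi * θ j0))
            - Real.cos ((2 * ((j:ℕ) + 2) / n) * x + (2 * Real.pi * θ j + 2 * Real.pi * θ j0))) / 2 := by
      intro x
      rw [hw_def, sin_mul_sin]
      have h1 : 2 * ((j : ℕ) + 1 : ℝ) * x / n + 2 * Real.pi * θ j - (2 * x / n + 2 * Real.pi * θ j0)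
          = (2 * (j:ℕ) / n) * x + (2 * Real.pi * θ j - 2 * Real.pi * θ j0) := by
        field_simp; ring
      have h2 : 2 * ((j : ℕ) + 1 : ℝ) * x / n + 2 * Real.pi * θ j + (2 * x / n + 2 * Real.pi * θ j0)
          = (2 * ((j:ℕ) + 2) / n) * x + (2 * Real.pi * θ j + 2 * Real.pi * θ j0) := by
        push_cast; field_simp; ring
      rw [h1, h2]
    rw [intervalIntegral.integral_congr (fun x _ => hrw x)]
    have hi1 : IntervalIntegrable (fun x => Real.cos ((2 * (j:ℕ) / n) * x + (2 * Real.pi * θ j - 2 * Real.pi * θ j0))) MeasureTheory.volume 0 L :=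
      (Real.continuous_cos.comp (by fun_prop)).intervalIntegrable _ _
    have hi2 : IntervalIntegrable (fun x => Real.cos ((2 * ((j:ℕ) + 2 : ℝ) / n) * x + (2 * Real.pi * θ j + 2 * Real.pi * θ j0))) MeasureTheory.volume 0 L :=
      (Real.continuous_cos.comp (by fun_prop)).intervalIntegrable _ _
    have hsecond : (∫ x in (0:ℝ)..L, Real.cos ((2 * ((j:ℕ) + 2 : ℝ) / n) * x + (2 * Real.pi * θ j + 2 * Real.pi * θ j0))) = 0 := by
      have := int_cos_per ((j:ℕ) + 2) (2 * Real.pi * θ j + 2 * Real.pi * θ j0) n hn (by omega)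
      rw [hL_def]
      convert this using 3
      push_cast; ring
    by_cases hj : j = j0
    · subst hj
      have hzero : (2 * ((j0:ℕ):ℝ) / n) = 0 := by
        simp [hj0]
      have hfirst : (∫ x in (0:ℝ)..L, Real.cos ((2 * ((j0:ℕ):ℝ) / n) * x + (2 * Real.pi * θ j0 - 2 * Real.pi * θ j0))) = L := by
        simp [hzero]
      rw [intervalIntegral.integral_div, intervalIntegral.integral_sub hi1 hi2, hfirst, hsecond, if_pos rfl]
      ring
    · have hjpos : 1 ≤ (j:ℕ) := by
        rcases Nat.eq_zero_or_pos (j:ℕ) with h0 | h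
        · exact absurd (Fin.ext h0 : j = j0) hj
        · exact h
      have hfirst : (∫ x in (0:ℝ)..L, Real.cos ((2 * ((j:ℕ):ℝ) / n) * x + (2 * Real.pi * θ j - 2 * Real.pi * θ j0))) = 0 := by
        have := int_cos_per (j:ℕ) (2 * Real.pi * θ j - 2 * Real.pi * θ j0) n hn hjpos
        rw [hL_def]; exact this
      rw [intervalIntegral.integral_div, intervalIntegral.integral_sub hi1 hi2, hfirst, hsecond, if_neg hj]
      ring
  -- the main integral
  have hint : (∫ x in (0:ℝ)..L, f x * w x) = L / 2 := by
    have : ∀ x : ℝ, f x * w x = ∑ j : Fin N,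
        Real.sin (2 * ((j:ℕ) + 1 : ℝ) * x / n + 2 * Real.pi * θ j) * w x := by
      intro x; rw [hf_def]; exact Finset.sum_mul _ _ _
    rw [intervalIntegral.integral_congr (fun x _ => this x),
      intervalIntegral.integral_finset_sum]
    · rw [Finset.sum_congr rfl (fun j _ => hterm j)]
      simp
    · intro j _
      exact ((Real.continuous_sin.comp (by fun_prop)).mul hwc).intervalIntegrable _ _
  -- pointwise bound
  have hptwise : ∀ x ∈ Icc (0:ℝ) L, f x * w x ≤ M := by
    intro x hx
    calc f x * w x ≤ |f x * w x| := le_abs_self _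
      _ = |f x| * |w x| := abs_mul _ _
      _ ≤ |f x| * 1 := by
          apply mul_le_mul_of_nonneg_left _ (abs_nonneg _)
          exact Real.abs_sin_le_one _
      _ = g x := by rw [mul_one]
      _ ≤ M := hle x hx
  have hmono : (∫ x in (0:ℝ)..L, f x * w x) ≤ ∫ x in (0:ℝ)..L, M := by
    apply intervalIntegral.integral_mono_on hL.le
    · exact ((hfc.mul hwc)).intervalIntegrable _ _
    · exact intervalIntegrable_const
    · exact hptwise
  rw [hint, intervalIntegral.integral_const, smul_eq_mul, sub_zero] at hmono
  -- L/2 ≤ L * M  →  1/2 ≤ M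
  have : (1:ℝ)/2 ≤ M := by nlinarith
  exact this
end

section
/- Let N ≥ 1 and, for θ = (θ_1, …, θ_N) ∈ [0,1)^N, define f₁(ξ,θ) = Σ_{j=1}^N sin(2jξ/N + 2πθ_j) and M₁(θ) = sup_{ξ ≥ 0} |f₁(ξ,θ)|. Then for every λ > 0, the Lebesgue measure of the set { θ ∈ [0,1)^N : M₁(θ) ≤ Nλ/2 + (2/λ) ln(8N(N+1)) + (2/λ) ln(2π) } is at least 3/4. -/
/-!
Under independent uniform phases every term `sin (c + 2πθ)` is a centred random variable with
values in `[-1, 1]`, so by Hoeffding's lemma and inequality `P(|f₁(ξ, ·)| ≥ a) ≤ 2 exp(-a²/2N)`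
for each fixed `ξ`. The function `f₁(·, θ)` has period `πN` and is `2N`-Lipschitz, so its
supremum exceeds its maximum over the grid `{iδ : i < m}` with `mδ ≥ πN` by at most `2Nδ`.
Taking `δ = 1/(2Nλ)` and `a = T - 1/λ`, where `T` is the claimed bound, a union bound over the
`m = ⌈2πN²λ⌉` grid points leaves an exceptional set of measure at most `1/4` when `λ < 2`;
for `λ ≥ 2` the trivial bound `|f₁| ≤ N ≤ T` suffices.
-/

open Set MeasureTheory ProbabilityTheory Real Function
open scoped NNReal

instance isProbabilityMeasure_volume_restrict_Ico :
    IsProbabilityMeasure (volume.restrict (Ico (0:ℝ) 1)) :=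
  ⟨by simp⟩

instance isProbabilityMeasure_volume_restrict_pi_Ico {ι : Type*} [Fintype ι] :
    IsProbabilityMeasure (volume.restrict (univ.pi fun _ : ι ↦ Ico (0:ℝ) 1)) := by
  rw [volume_pi, Measure.restrict_pi_pi]
  infer_instance

lemma setIntegral_Ico_zero_one_sin_add_two_pi_mul (c : ℝ) :
    ∫ t in Ico (0:ℝ) 1, sin (c + 2 * π * t) = 0 := by
  rw [integral_Ico_eq_integral_Ioc, ← intervalIntegral.integral_of_le zero_le_one]
  simp_rw [add_comm c]
  rw [intervalIntegral.integral_comp_mul_add _ two_pi_pos.ne', integral_sin]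
  simp [add_comm _ c]

lemma hasSubgaussianMGF_sin_add_two_pi_mul (c : ℝ) :
    HasSubgaussianMGF (fun t ↦ sin (c + 2 * π * t)) 1 (volume.restrict (Ico (0:ℝ) 1)) := by
  convert hasSubgaussianMGF_of_mem_Icc_of_integral_eq_zero (a := -1) (b := 1)
    (by fun_prop : AEMeasurable (fun t ↦ sin (c + 2 * π * t)) (volume.restrict (Ico (0:ℝ) 1)))
    (ae_of_all _ fun t ↦ ⟨neg_one_le_sin _, sin_le_one _⟩)
    (setIntegral_Ico_zero_one_sin_add_two_pi_mul c)
  ext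
  norm_num

lemma hasSubgaussianMGF_sum_sin_add_two_pi_mul {ι : Type*} [Fintype ι] (c : ι → ℝ) :
    HasSubgaussianMGF (fun θ : ι → ℝ ↦ ∑ j, sin (c j + 2 * π * θ j)) (Fintype.card ι)
      (volume.restrict (univ.pi fun _ : ι ↦ Ico (0:ℝ) 1)) := by
  rw [volume_pi, Measure.restrict_pi_pi]
  have hterm (j : ι) : HasSubgaussianMGF (fun θ : ι → ℝ ↦ sin (c j + 2 * π * θ j)) 1
      (Measure.pi fun _ ↦ volume.restrict (Ico (0:ℝ) 1)) := by
    refine HasSubgaussianMGF.of_map (X := fun t ↦ sin (c j + 2 * π * t))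
      (measurable_pi_apply j).aemeasurable ?_
    rw [(measurePreserving_eval (fun _ : ι ↦ volume.restrict (Ico (0:ℝ) 1)) j).map_eq]
    exact hasSubgaussianMGF_sin_add_two_pi_mul (c j)
  simpa using HasSubgaussianMGF.sum_of_iIndepFun (s := Finset.univ) (c := fun _ ↦ 1)
    (iIndepFun_pi (X := fun j t ↦ sin (c j + 2 * π * t)) fun j ↦ by fun_prop)
    fun j _ ↦ hterm j

lemma ProbabilityTheory.HasSubgaussianMGF.measureReal_abs_ge_le {Ω : Type*} [MeasurableSpace Ω]
    {μ : Measure Ω} {X : Ω → ℝ} {c : ℝ≥0} (h : HasSubgaussianMGF X c μ) {ε : ℝ} (hε : 0 ≤ ε) :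
    μ.real {ω | ε ≤ |X ω|} ≤ 2 * exp (-ε ^ 2 / (2 * c)) := by
  have hunion : {ω | ε ≤ |X ω|} = {ω | ε ≤ X ω} ∪ {ω | ε ≤ (-X) ω} := by
    ext ω
    simp [le_abs]
  rw [hunion, two_mul]
  exact (measureReal_union_le _ _).trans
    (add_le_add (h.measure_ge_le hε) (h.neg.measure_ge_le hε))

lemma three_quarters_le_volume_of_restrict_le {ι : Type*} [Fintype ι] {P : (ι → ℝ) → Prop}
    {B : Set (ι → ℝ)} (hB : volume.restrict (univ.pi fun _ : ι ↦ Ico (0:ℝ) 1) B ≤ 1 / 4)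
    (hP : ∀ θ ∉ B, P θ) :
    3 / 4 ≤ volume {θ : ι → ℝ | (∀ j, θ j ∈ Ico (0:ℝ) 1) ∧ P θ} := by
  set μ := volume.restrict (univ.pi fun _ : ι ↦ Ico (0:ℝ) 1)
  have hset : volume {θ : ι → ℝ | (∀ j, θ j ∈ Ico (0:ℝ) 1) ∧ P θ} = μ {θ | P θ} := by
    rw [Measure.restrict_apply' (MeasurableSet.univ_pi fun _ ↦ measurableSet_Ico)]
    congr 1
    ext θ
    simp [and_comm]
  have hcompl : 1 ≤ 1 / 4 + μ {θ | P θ} :=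
    calc 1 = μ univ := measure_univ.symm
      _ ≤ μ B + μ Bᶜ := measure_univ_le_add_compl B
      _ ≤ 1 / 4 + μ {θ | P θ} := add_le_add hB (measure_mono fun θ hθ ↦ hP θ hθ)
  have h34 : (3 / 4 : ENNReal) = 1 - 1 / 4 := ENNReal.eq_sub_of_add_eq (by simp) (by
    rw [ENNReal.div_add_div_same, show (3 + 1 : ENNReal) = 4 by norm_num, ENNReal.div_self] <;>
      norm_num)
  rwa [hset, h34, tsub_le_iff_left]

lemma Function.Periodic.abs_le_add_of_abs_nat_mul_le {g : ℝ → ℝ} {P δ a : ℝ} {K : ℝ≥0} {m : ℕ}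
    (hg : Periodic g P) (hP : 0 < P) (hK : LipschitzWith K g) (hδ : 0 < δ) (hm : P ≤ m * δ)
    (hgrid : ∀ i < m, |g (i * δ)| ≤ a) (x : ℝ) : |g x| ≤ a + K * δ := by
  obtain ⟨y, ⟨hy0, hyP⟩, hxy⟩ := hg.exists_mem_Ico₀ hP x
  rw [hxy]
  set i := ⌊y / δ⌋₊
  have hiy : i * δ ≤ y := (le_div_iff₀ hδ).1 (Nat.floor_le (div_nonneg hy0 hδ.le))
  have hyi : y < (i + 1) * δ := (div_lt_iff₀ hδ).1 (Nat.lt_floor_add_one _)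
  have him : i < m := by
    have : (i : ℝ) * δ < m * δ := by linarith
    exact_mod_cast lt_of_mul_lt_mul_right this hδ.le
  have hdist : |g y - g (i * δ)| ≤ K * δ := by
    have := hK.dist_le_mul y (i * δ)
    rw [Real.dist_eq, Real.dist_eq, abs_of_nonneg (sub_nonneg.2 hiy)] at this
    exact this.trans (by gcongr; linarith)
  linarith [abs_sub_abs_le_abs_sub (g y) (g (i * δ)), hgrid i him]

noncomputable def sinSum (N : ℕ) (θ : Fin N → ℝ) (ξ : ℝ) : ℝ :=
  ∑ j : Fin N, sin (2 * ((j : ℕ) + 1 : ℝ) * ξ / N + 2 * π * θ j)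

namespace sinSum

variable {N : ℕ} (θ : Fin N → ℝ)

lemma abs_le (ξ : ℝ) : |sinSum N θ ξ| ≤ N := by
  refine (Finset.abs_sum_le_sum_abs _ _).trans ?_
  simpa using Finset.sum_le_sum (s := (Finset.univ : Finset (Fin N))) fun j _ ↦
    abs_sin_le_one (2 * ((j : ℕ) + 1 : ℝ) * ξ / N + 2 * π * θ j)

lemma periodic : Periodic (sinSum N θ) (π * N) := by
  intro ξ
  refine Finset.sum_congr rfl fun j _ ↦ ?_
  rcases N.eq_zero_or_pos with rfl | hN
  · exact j.elim0
  have h : 2 * ((j : ℕ) + 1 : ℝ) * (ξ + π * N) / N + 2 * π * θ j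
      = 2 * ((j : ℕ) + 1 : ℝ) * ξ / N + 2 * π * θ j + ((j + 1 : ℕ) : ℝ) * (2 * π) := by
    push_cast
    field_simp
    ring
  rw [h, sin_add_nat_mul_two_pi]

lemma lipschitzWith : LipschitzWith (2 * N) (sinSum N θ) := by
  refine LipschitzWith.of_dist_le_mul fun x y ↦ ?_
  rw [Real.dist_eq, Real.dist_eq, sinSum, sinSum, ← Finset.sum_sub_distrib]
  refine (Finset.abs_sum_le_sum_abs _ _).trans ?_
  have hterm (j : Fin N) : |sin (2 * ((j : ℕ) + 1 : ℝ) * x / N + 2 * π * θ j)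
      - sin (2 * ((j : ℕ) + 1 : ℝ) * y / N + 2 * π * θ j)| ≤ 2 * |x - y| := by
    have hj : 2 * ((j : ℕ) + 1 : ℝ) / N ≤ 2 := by
      rw [div_le_iff₀ (by have := j.pos; positivity)]
      have : ((j : ℕ) + 1 : ℝ) ≤ N := by exact_mod_cast j.isLt
      linarith
    refine (abs_sin_sub_sin_le _ _).trans ?_
    rw [show 2 * ((j : ℕ) + 1 : ℝ) * x / N + 2 * π * θ j
        - (2 * ((j : ℕ) + 1 : ℝ) * y / N + 2 * π * θ j) = 2 * ((j : ℕ) + 1 : ℝ) / N * (x - y) by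
      ring, abs_mul, abs_of_nonneg (by positivity)]
    gcongr
  refine (Finset.sum_le_sum fun j _ ↦ hterm j).trans ?_
  simp only [Finset.sum_const, Finset.card_univ, Fintype.card_fin, nsmul_eq_mul]
  push_cast
  ring_nf
  rfl

end sinSum

lemma measureReal_biUnion_abs_sinSum_ge_le {N : ℕ} (ξ : ℕ → ℝ) (m : ℕ) {a : ℝ} (ha : 0 ≤ a) :
    (volume.restrict (univ.pi fun _ : Fin N ↦ Ico (0:ℝ) 1)).real
        (⋃ i ∈ Finset.range m, {θ | a ≤ |sinSum N θ (ξ i)|}) ≤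
      m * (2 * exp (-a ^ 2 / (2 * N))) := by
  refine (measureReal_biUnion_finset_le _ _).trans ?_
  simpa [sinSum] using Finset.sum_le_card_nsmul (Finset.range m) _ _ fun i _ ↦
    (hasSubgaussianMGF_sum_sin_add_two_pi_mul
      fun j : Fin N ↦ 2 * ((j : ℕ) + 1 : ℝ) * ξ i / N).measureReal_abs_ge_le ha

noncomputable def threshold (N : ℕ) (lam : ℝ) : ℝ :=
  N * lam / 2 + (2 / lam) * Real.log (8 * N * (N + 1)) + (2 / lam) * Real.log (2 * Real.pi)

section threshold

variable {N : ℕ} {lam : ℝ}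

lemma one_le_log_eight_mul (hN : 1 ≤ N) : 1 ≤ Real.log (8 * N * (N + 1)) := by
  have hN' : (1 : ℝ) ≤ N := by exact_mod_cast hN
  rw [le_log_iff_exp_le (by positivity)]
  have := exp_one_lt_d9
  nlinarith

lemma natCast_le_threshold (hN : 1 ≤ N) (hlam : 2 ≤ lam) : (N : ℝ) ≤ threshold N lam := by
  have := one_le_log_eight_mul hN
  have : 0 ≤ Real.log (2 * π) := log_nonneg (by linarith [pi_gt_three])
  have : (N : ℝ) ≤ N * lam / 2 := by nlinarith [(Nat.cast_nonneg N : (0 : ℝ) ≤ N)]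
  have : 0 < lam := by linarith
  have : 0 ≤ (2 / lam) * Real.log (8 * N * (N + 1)) := by positivity
  have : 0 ≤ (2 / lam) * Real.log (2 * π) := by positivity
  unfold threshold
  linarith

lemma one_div_le_threshold (hN : 1 ≤ N) (hlam : 0 < lam) : 1 / lam ≤ threshold N lam := by
  have := one_le_log_eight_mul hN
  have : 0 ≤ Real.log (2 * π) := log_nonneg (by linarith [pi_gt_three])
  have : 1 / lam ≤ (2 / lam) * Real.log (8 * N * (N + 1)) := by
    rw [div_mul_eq_mul_div, div_le_div_iff_of_pos_right hlam]
    linarith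
  have : 0 ≤ N * lam / 2 := by positivity
  have : 0 ≤ (2 / lam) * Real.log (2 * π) := by positivity
  unfold threshold
  linarith

lemma exp_neg_sq_threshold_sub_one_div_le (hN : 1 ≤ N) (hlam : 0 < lam) :
    exp (-(threshold N lam - 1 / lam) ^ 2 / (2 * N)) ≤
      exp 1 / ((8 * N * (N + 1)) ^ 2 * (2 * π) ^ 2) := by
  have hN' : (0 : ℝ) < N := by exact_mod_cast hN
  -- the Hoeffding exponent is at most the Chernoff exponent at parameter `lam` (AM-GM)
  calc exp (-(threshold N lam - 1 / lam) ^ 2 / (2 * N))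
      ≤ exp (N * lam ^ 2 / 2 - lam * (threshold N lam - 1 / lam)) := by
        gcongr
        rw [div_le_iff₀ (by positivity)]
        nlinarith [sq_nonneg (N * lam - (threshold N lam - 1 / lam))]
    _ = exp 1 / ((8 * N * (N + 1)) ^ 2 * (2 * π) ^ 2) := by
        rw [← exp_log (by positivity : (0 : ℝ) < (8 * N * (N + 1)) ^ 2 * (2 * π) ^ 2),
          ← exp_sub, log_mul (by positivity) (by positivity), log_pow, log_pow, threshold]
        congr 1
        field_simp
        push_cast
        ring

lemma natCeil_mul_two_mul_exp_le (hN : 1 ≤ N) (hlam : 0 < lam) (hlam2 : lam < 2) :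
    ⌈2 * π * N ^ 2 * lam⌉₊ * (2 * exp (-(threshold N lam - 1 / lam) ^ 2 / (2 * N))) ≤ 1 / 4 := by
  have hN' : (1 : ℝ) ≤ N := by exact_mod_cast hN
  have hπ := pi_gt_three
  have hm : (⌈2 * π * N ^ 2 * lam⌉₊ : ℝ) ≤ 5 * π * N ^ 2 := by
    have := Nat.ceil_lt_add_one (by positivity : (0 : ℝ) ≤ 2 * π * N ^ 2 * lam)
    nlinarith
  have he := exp_one_lt_d9
  calc _ ≤ 5 * π * N ^ 2 * (2 * (exp 1 / ((8 * N * (N + 1)) ^ 2 * (2 * π) ^ 2))) := by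
        gcongr
        exact exp_neg_sq_threshold_sub_one_div_le hN hlam
    _ = 5 * exp 1 / (128 * π * (N + 1) ^ 2) := by
        field_simp
        ring
    _ ≤ 1 / 4 := by
        rw [div_le_div_iff₀ (by positivity) (by norm_num)]
        nlinarith

end threshold

lemma exists_forall_abs_sinSum_le_threshold {N : ℕ} {lam : ℝ} (hN : 1 ≤ N) (hlam : 0 < lam) :
    ∃ B, volume.restrict (univ.pi fun _ : Fin N ↦ Ico (0:ℝ) 1) B ≤ 1 / 4 ∧
      ∀ θ ∉ B, ∀ ξ, |sinSum N θ ξ| ≤ threshold N lam := by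
  rcases le_or_gt 2 lam with hlam2 | hlam2
  · exact ⟨∅, by simp, fun θ _ ξ ↦ (sinSum.abs_le θ ξ).trans (natCast_le_threshold hN hlam2)⟩
  have hN' : (0 : ℝ) < N := by exact_mod_cast hN
  set δ := 1 / (2 * N * lam) with hδ
  set m := ⌈2 * π * N ^ 2 * lam⌉₊
  set a := threshold N lam - 1 / lam with ha_def
  have ha : 0 ≤ a := sub_nonneg.2 (one_div_le_threshold hN hlam)
  refine ⟨⋃ i ∈ Finset.range m, {θ | a ≤ |sinSum N θ (i * δ)|}, ?_, fun θ hθ ξ ↦ ?_⟩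
  · rw [← ofReal_measureReal (measure_ne_top _ _),
      show (1 / 4 : ENNReal) = ENNReal.ofReal (1 / 4) by rw [ENNReal.ofReal_div_of_pos] <;> simp]
    exact ENNReal.ofReal_le_ofReal <| (measureReal_biUnion_abs_sinSum_ge_le _ m ha).trans
      (natCeil_mul_two_mul_exp_le hN hlam hlam2)
  simp only [mem_iUnion, Finset.mem_range, mem_ofPred_eq, not_exists, not_le] at hθ
  have hm : π * N ≤ m * δ :=
    calc π * N = 2 * π * N ^ 2 * lam * δ := by rw [hδ]; field_simp
      _ ≤ m * δ := by gcongr; exact Nat.le_ceil _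
  calc |sinSum N θ ξ| ≤ a + (2 * N : ℝ≥0) * δ :=
        (sinSum.periodic θ).abs_le_add_of_abs_nat_mul_le (by positivity) (sinSum.lipschitzWith θ)
          (by positivity) hm (fun i hi ↦ (hθ i hi).le) ξ
    _ = threshold N lam := by
        rw [ha_def, hδ]
        push_cast
        field_simp
        ring

/-- for `N ≥ 1`, with `f₁(ξ,θ) = Σ_j sin(2jξ/N + 2πθ_j)` and
`M₁(θ) = sup_{ξ ≥ 0} |f₁(ξ,θ)|`, for every `λ > 0` the Lebesgue measure of
`{θ ∈ [0,1)^N : M₁(θ) ≤ Nλ/2 + (2/λ) ln(8N(N+1)) + (2/λ) ln(2π)}` is at least `3/4`. -/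
theorem stmt11 (N : ℕ) (hN : 1 ≤ N) (lam : ℝ) (hlam : 0 < lam) :
    (3 / 4 : ENNReal) ≤ volume {θ : Fin N → ℝ |
      (∀ j, θ j ∈ Ico (0 : ℝ) 1) ∧
      sSup ((fun ξ : ℝ =>
          |∑ j : Fin N, Real.sin (2 * ((j : ℕ) + 1 : ℝ) * ξ / N + 2 * Real.pi * θ j)|) ''
        Ici 0)
        ≤ N * lam / 2 + (2 / lam) * Real.log (8 * N * (N + 1))
            + (2 / lam) * Real.log (2 * Real.pi)} := by
  obtain ⟨B, hB, hgood⟩ := exists_forall_abs_sinSum_le_threshold hN hlam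
  exact three_quarters_le_volume_of_restrict_le hB fun θ hθ ↦
    csSup_le (nonempty_Ici.image _) (forall_mem_image.2 fun ξ _ ↦ hgood θ hθ ξ)
end

section
/- Let 0 < α < 2, E ∈ ℝ, and let q : (0,∞) → ℝ be continuous. Suppose u is twice continuously differentiable on (0,∞) and satisfies -u''(x) - x^α u(x) + q(x)u(x) = E u(x) for all x > 0. Define φ(ξ) = c^{α/4} ξ^{α/(2(2+α))} u(c ξ^{2/(2+α)}) for ξ > 0. Then φ is twice differentiable on (0,∞) and satisfies -φ''(ξ) + Q(ξ,E) φ(ξ) = φ(ξ) for all ξ > 0, where Q(ξ,E) = ( -(5/4) α²/(2+α)² + α(α-1)/(2+α)² ) ξ^{-2} - E/(c^α ξ^{2α/(2+α)}) + q(c ξ^{2/(2+α)})/(c^α ξ^{2α/(2+α)}). -/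
open Set

set_option maxHeartbeats 1600000 in
/-- Liouville transformation: if `u` solves
`-u'' - x^α u + q u = E u` on `(0,∞)` (with `q` continuous and `u` twice continuously
differentiable), then `φ(ξ) = c^{α/4} ξ^{α/(2(2+α))} u(c ξ^{2/(2+α)})` is twice
differentiable on `(0,∞)` and solves `-φ'' + Q(·,E) φ = φ`, where
`Q(ξ,E) = (-(5/4)α²/(2+α)² + α(α-1)/(2+α)²) ξ^{-2} - E/(c^α ξ^{2α/(2+α)})
  + q(c ξ^{2/(2+α)})/(c^α ξ^{2α/(2+α)})`. -/
theorem stmt14 (α : ℝ) (hα0 : 0 < α) (hα2 : α < 2) (Eval : ℝ)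
    (q : ℝ → ℝ) (hq : ContinuousOn q (Ioi 0))
    (u u' u'' : ℝ → ℝ)
    (hu' : ∀ x ∈ Ioi (0 : ℝ), HasDerivAt u (u' x) x)
    (hu'' : ∀ x ∈ Ioi (0 : ℝ), HasDerivAt u' (u'' x) x)
    (hu''c : ContinuousOn u'' (Ioi 0))
    (hode : ∀ x ∈ Ioi (0 : ℝ), -u'' x - x ^ α * u x + q x * u x = Eval * u x)
    (c : ℝ) (hc : c = (1 + α / 2) ^ ((2 : ℝ) / (2 + α)))
    (φ : ℝ → ℝ)
    (hφ : ∀ ξ : ℝ, φ ξ = c ^ (α / 4) * ξ ^ (α / (2 * (2 + α))) * u (c * ξ ^ ((2 : ℝ) / (2 + α))))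
    (Q : ℝ → ℝ)
    (hQ : ∀ ξ : ℝ, Q ξ =
      (-(5 / 4) * α ^ 2 / (2 + α) ^ 2 + α * (α - 1) / (2 + α) ^ 2) * ξ ^ (-(2 : ℝ))
        - Eval / (c ^ α * ξ ^ (2 * α / (2 + α)))
        + q (c * ξ ^ ((2 : ℝ) / (2 + α))) / (c ^ α * ξ ^ (2 * α / (2 + α)))) :
    ∃ φ' φ'' : ℝ → ℝ,
      (∀ ξ ∈ Ioi (0 : ℝ), HasDerivAt φ (φ' ξ) ξ) ∧
      (∀ ξ ∈ Ioi (0 : ℝ), HasDerivAt φ' (φ'' ξ) ξ) ∧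
      ∀ ξ ∈ Ioi (0 : ℝ), -φ'' ξ + Q ξ * φ ξ = φ ξ := by
  have h2α : (0:ℝ) < 2 + α := by linarith
  have hm : (0:ℝ) < 1 + α / 2 := by linarith
  have hcpos : 0 < c := by rw [hc]; positivity
  have hφf : φ = fun t : ℝ => c ^ (α / 4) * t ^ (α / (2 * (2 + α))) *
      u (c * t ^ ((2 : ℝ) / (2 + α))) := funext hφ
  refine ⟨fun ξ => c ^ (α / 4) * (α / (2 * (2 + α)) * ξ ^ (α / (2 * (2 + α)) - 1)) *
        u (c * ξ ^ ((2 : ℝ) / (2 + α))) +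
      c ^ (α / 4) * ξ ^ (α / (2 * (2 + α))) * (u' (c * ξ ^ ((2 : ℝ) / (2 + α))) *
        (c * ((2 : ℝ) / (2 + α) * ξ ^ ((2 : ℝ) / (2 + α) - 1)))),
    fun ξ => (c ^ (α / 4) * (α / (2 * (2 + α)) * ((α / (2 * (2 + α)) - 1) *
          ξ ^ (α / (2 * (2 + α)) - 1 - 1))) * u (c * ξ ^ ((2 : ℝ) / (2 + α))) +
        c ^ (α / 4) * (α / (2 * (2 + α)) * ξ ^ (α / (2 * (2 + α)) - 1)) *
          (u' (c * ξ ^ ((2 : ℝ) / (2 + α))) *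
            (c * ((2 : ℝ) / (2 + α) * ξ ^ ((2 : ℝ) / (2 + α) - 1))))) +
      (c ^ (α / 4) * (α / (2 * (2 + α)) * ξ ^ (α / (2 * (2 + α)) - 1)) *
          (u' (c * ξ ^ ((2 : ℝ) / (2 + α))) *
            (c * ((2 : ℝ) / (2 + α) * ξ ^ ((2 : ℝ) / (2 + α) - 1)))) +
        c ^ (α / 4) * ξ ^ (α / (2 * (2 + α))) *
          (u'' (c * ξ ^ ((2 : ℝ) / (2 + α))) *
              (c * ((2 : ℝ) / (2 + α) * ξ ^ ((2 : ℝ) / (2 + α) - 1))) *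
              (c * ((2 : ℝ) / (2 + α) * ξ ^ ((2 : ℝ) / (2 + α) - 1))) +
            u' (c * ξ ^ ((2 : ℝ) / (2 + α))) *
              (c * ((2 : ℝ) / (2 + α) * (((2 : ℝ) / (2 + α) - 1) *
                ξ ^ ((2 : ℝ) / (2 + α) - 1 - 1)))))), ?_, ?_, ?_⟩
  · intro ξ hξ
    have hξ' : 0 < ξ := hξ
    have hxpos : 0 < c * ξ ^ ((2 : ℝ) / (2 + α)) :=
      mul_pos hcpos (Real.rpow_pos_of_pos hξ' _)
    have h1 : HasDerivAt (fun t : ℝ => c ^ (α / 4) * t ^ (α / (2 * (2 + α))))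
        (c ^ (α / 4) * (α / (2 * (2 + α)) * ξ ^ (α / (2 * (2 + α)) - 1))) ξ :=
      (Real.hasDerivAt_rpow_const (Or.inl hξ'.ne')).const_mul _
    have h2 : HasDerivAt (fun t : ℝ => c * t ^ ((2 : ℝ) / (2 + α)))
        (c * ((2 : ℝ) / (2 + α) * ξ ^ ((2 : ℝ) / (2 + α) - 1))) ξ :=
      (Real.hasDerivAt_rpow_const (Or.inl hξ'.ne')).const_mul c
    have hcomp : HasDerivAt (fun t : ℝ => u (c * t ^ ((2 : ℝ) / (2 + α))))
        (u' (c * ξ ^ ((2 : ℝ) / (2 + α))) *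
          (c * ((2 : ℝ) / (2 + α) * ξ ^ ((2 : ℝ) / (2 + α) - 1)))) ξ :=
      HasDerivAt.comp ξ (hu' _ hxpos) h2
    rw [hφf]
    exact h1.mul hcomp
  · intro ξ hξ
    have hξ' : 0 < ξ := hξ
    have hxpos : 0 < c * ξ ^ ((2 : ℝ) / (2 + α)) :=
      mul_pos hcpos (Real.rpow_pos_of_pos hξ' _)
    have h1 : HasDerivAt (fun t : ℝ => c ^ (α / 4) * t ^ (α / (2 * (2 + α))))
        (c ^ (α / 4) * (α / (2 * (2 + α)) * ξ ^ (α / (2 * (2 + α)) - 1))) ξ :=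
      (Real.hasDerivAt_rpow_const (Or.inl hξ'.ne')).const_mul _
    have h2 : HasDerivAt (fun t : ℝ => c * t ^ ((2 : ℝ) / (2 + α)))
        (c * ((2 : ℝ) / (2 + α) * ξ ^ ((2 : ℝ) / (2 + α) - 1))) ξ :=
      (Real.hasDerivAt_rpow_const (Or.inl hξ'.ne')).const_mul c
    have hcomp : HasDerivAt (fun t : ℝ => u (c * t ^ ((2 : ℝ) / (2 + α))))
        (u' (c * ξ ^ ((2 : ℝ) / (2 + α))) *
          (c * ((2 : ℝ) / (2 + α) * ξ ^ ((2 : ℝ) / (2 + α) - 1)))) ξ :=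
      HasDerivAt.comp ξ (hu' _ hxpos) h2
    have hG1 : HasDerivAt (fun t : ℝ => c ^ (α / 4) * (α / (2 * (2 + α)) * t ^ (α / (2 * (2 + α)) - 1)))
        (c ^ (α / 4) * (α / (2 * (2 + α)) * ((α / (2 * (2 + α)) - 1) *
          ξ ^ (α / (2 * (2 + α)) - 1 - 1)))) ξ :=
      ((Real.hasDerivAt_rpow_const (Or.inl hξ'.ne')).const_mul _).const_mul _
    have hA : HasDerivAt (fun t : ℝ => u' (c * t ^ ((2 : ℝ) / (2 + α))))
        (u'' (c * ξ ^ ((2 : ℝ) / (2 + α))) *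
          (c * ((2 : ℝ) / (2 + α) * ξ ^ ((2 : ℝ) / (2 + α) - 1)))) ξ :=
      HasDerivAt.comp ξ (hu'' _ hxpos) h2
    have hD : HasDerivAt (fun t : ℝ => c * ((2 : ℝ) / (2 + α) * t ^ ((2 : ℝ) / (2 + α) - 1)))
        (c * ((2 : ℝ) / (2 + α) * (((2 : ℝ) / (2 + α) - 1) *
          ξ ^ ((2 : ℝ) / (2 + α) - 1 - 1)))) ξ :=
      ((Real.hasDerivAt_rpow_const (Or.inl hξ'.ne')).const_mul _).const_mul c
    exact (hG1.mul hcomp).add (h1.mul (hA.mul hD))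
  · intro ξ hξ
    have hξ' : 0 < ξ := hξ
    have hBpos : (0:ℝ) < ξ ^ ((2 : ℝ) / (2 + α)) := Real.rpow_pos_of_pos hξ' _
    have hxpos : 0 < c * ξ ^ ((2 : ℝ) / (2 + α)) := mul_pos hcpos hBpos
    have hu2 : u'' (c * ξ ^ ((2 : ℝ) / (2 + α))) =
        q (c * ξ ^ ((2 : ℝ) / (2 + α))) * u (c * ξ ^ ((2 : ℝ) / (2 + α)))
        - (c * ξ ^ ((2 : ℝ) / (2 + α))) ^ α * u (c * ξ ^ ((2 : ℝ) / (2 + α)))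
        - Eval * u (c * ξ ^ ((2 : ℝ) / (2 + α))) := by
      have := hode _ hxpos; linarith
    have eg1 : ξ ^ (α / (2 * (2 + α)) - 1) = ξ ^ (α / (2 * (2 + α))) * ξ⁻¹ := by
      rw [Real.rpow_sub hξ', Real.rpow_one, div_eq_mul_inv]
    have eg2 : ξ ^ (α / (2 * (2 + α)) - 1 - 1) = ξ ^ (α / (2 * (2 + α))) * ξ⁻¹ * ξ⁻¹ := by
      rw [Real.rpow_sub hξ', Real.rpow_one, div_eq_mul_inv, eg1]
    have eb1 : ξ ^ ((2 : ℝ) / (2 + α) - 1) = ξ ^ ((2 : ℝ) / (2 + α)) * ξ⁻¹ := by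
      rw [Real.rpow_sub hξ', Real.rpow_one, div_eq_mul_inv]
    have eb2 : ξ ^ ((2 : ℝ) / (2 + α) - 1 - 1) = ξ ^ ((2 : ℝ) / (2 + α)) * ξ⁻¹ * ξ⁻¹ := by
      rw [Real.rpow_sub hξ', Real.rpow_one, div_eq_mul_inv, eb1]
    have e2 : ξ ^ (-(2:ℝ)) = ξ⁻¹ * ξ⁻¹ := by
      rw [show (-(2:ℝ)) = -1 + -1 by norm_num, Real.rpow_add hξ',
        Real.rpow_neg hξ'.le, Real.rpow_one]
    have eT : ξ ^ (2 * α / (2 + α)) =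
        ξ * ξ * (ξ ^ ((2 : ℝ) / (2 + α)) * ξ ^ ((2 : ℝ) / (2 + α)))⁻¹ := by
      rw [show 2 * α / (2 + α) = 1 + 1 - ((2 : ℝ) / (2 + α) + (2 : ℝ) / (2 + α)) by
        field_simp; ring]
      rw [Real.rpow_sub hξ', Real.rpow_add hξ', Real.rpow_add hξ', Real.rpow_one,
        div_eq_mul_inv]
    have exα : (c * ξ ^ ((2 : ℝ) / (2 + α))) ^ α =
        c ^ α * (ξ * ξ * (ξ ^ ((2 : ℝ) / (2 + α)) * ξ ^ ((2 : ℝ) / (2 + α)))⁻¹) := by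
      rw [Real.mul_rpow hcpos.le hBpos.le, ← Real.rpow_mul hξ'.le,
        show (2 : ℝ) / (2 + α) * α = 2 * α / (2 + α) by ring, eT]
    have hc2 : c ^ α * (c * c) = (1 + α / 2) * (1 + α / 2) := by
      have h1 : c ^ (α + (1 + 1)) = (1 + α / 2) * (1 + α / 2) := by
        rw [hc, ← Real.rpow_mul hm.le,
          show (2 : ℝ) / (2 + α) * (α + (1 + 1)) = 1 + 1 by field_simp; ring,
          Real.rpow_add hm, Real.rpow_one]
      rw [← h1, Real.rpow_add hcpos, Real.rpow_add hcpos, Real.rpow_one]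
      try ring
    have hcα : c ^ α = (1 + α / 2) * (1 + α / 2) / (c * c) := by
      rw [eq_div_iff (by positivity)]; exact hc2
    beta_reduce
    rw [hQ, hφ, hu2, exα, eg2, eg1, eb2, eb1, e2, eT, hcα]
    field_simp
    ring
end

section
/- Let 0 < α < 2, a > 0, E > 0, and t ∈ ℝ, and define λ(s) = 2a sin²( 2∫₀^{s} √(1 - β_E(x)) dx + 2t ) / s for s ≥ 1. Then there exist a constant c₀ ∈ ℝ and constants C > 0, ε > 0 such that for all ξ ≥ 1, | ∫₁^{ξ} λ(s) ds - a ln ξ + c₀ | ≤ C ξ^{-ε}. In particular, e^{-∫₁^{ξ} λ(s)ds} is comparable to ξ^{-a} as ξ → ∞. -/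
/-! Since `2 sin² θ = 1 - cos 2θ`, the integral of `λ` is `a log ξ - a ∫₁^ξ cos φ(s) / s ds`
with phase `φ(s) = 4 ∫₀^s √(1 - β) + 4t`. Its speed `φ' = 4 √(1 - β)` is at least `4`, and
`(φ'(s) s)' = φ' + φ'' s` is bounded since `β` decays like a power. Integrating by parts against
`(sin φ)' = φ' cos φ` writes `cos φ(s) / s` as the derivative of `sin φ(s) / (φ'(s) s) = O(1/s)`
plus a remainder `O(s⁻²)`; so the oscillatory integral converges, with tail `O(1/ξ)`. -/

open MeasureTheory Set Real

lemma abs_setIntegral_Ioi_le_of_abs_le_mul_rpow {f : ℝ → ℝ} {C ξ : ℝ} (hξ : 0 < ξ)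
    (hf : ∀ s, ξ ≤ s → |f s| ≤ C * s ^ (-2 : ℝ)) :
    |∫ s in Ioi ξ, f s| ≤ C * ξ⁻¹ := by
  have hmaj : IntegrableOn (fun s : ℝ => C * s ^ (-2 : ℝ)) (Ioi ξ) :=
    (integrableOn_Ioi_rpow_of_lt (by norm_num) hξ).const_mul C
  calc |∫ s in Ioi ξ, f s| ≤ ∫ s in Ioi ξ, C * s ^ (-2 : ℝ) :=
        norm_integral_le_of_norm_le hmaj <| (ae_restrict_iff' measurableSet_Ioi).mpr <|
          .of_forall fun s hs => (norm_eq_abs (f s)).trans_le (hf s (le_of_lt hs))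
    _ = C * ξ⁻¹ := by
        rw [integral_const_mul, integral_Ioi_rpow_of_lt (by norm_num) hξ]
        norm_num [Real.rpow_neg_one]

lemma integrableOn_Ioi_of_abs_le_mul_rpow {f : ℝ → ℝ} {C ξ : ℝ} (hξ : 0 < ξ)
    (hcont : ContinuousOn f (Ici ξ)) (hf : ∀ s, ξ ≤ s → |f s| ≤ C * s ^ (-2 : ℝ)) :
    IntegrableOn f (Ioi ξ) :=
  Integrable.mono' ((integrableOn_Ioi_rpow_of_lt (by norm_num) hξ).const_mul C)
    ((hcont.mono Ioi_subset_Ici_self).aestronglyMeasurable measurableSet_Ioi)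
    ((ae_restrict_iff' measurableSet_Ioi).mpr <|
      .of_forall fun s hs => (norm_eq_abs (f s)).trans_le (hf s (le_of_lt hs)))

section Oscillatory

variable {φ w w' : ℝ → ℝ} {m B : ℝ}

lemma hasDerivAt_sin_div_mul_self {s : ℝ} (hs : s ≠ 0) (hws : w s ≠ 0)
    (hφ : HasDerivAt φ (w s) s) (hw : HasDerivAt w (w' s) s) :
    HasDerivAt (fun u => sin (φ u) / (w u * u))
      (cos (φ s) / s - sin (φ s) * (w s + w' s * s) / (w s * s) ^ 2) s := by
  refine (hφ.sin.fun_div (hw.fun_mul (hasDerivAt_id' s)) (mul_ne_zero hws hs)).congr_deriv ?_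
  field_simp
  ring

lemma abs_sin_mul_div_sq_le (hm : 0 < m) {s : ℝ} (hs : 1 ≤ s) (hmw : m ≤ w s)
    (hB : |w s + w' s * s| ≤ B) (θ : ℝ) :
    |sin θ * (w s + w' s * s) / (w s * s) ^ 2| ≤ B / m ^ 2 * s ^ (-2 : ℝ) := by
  have hs0 : 0 < s := by linarith
  have hnum : |sin θ * (w s + w' s * s)| ≤ B := by
    rw [abs_mul]
    exact (mul_le_of_le_one_left (abs_nonneg _) (abs_sin_le_one θ)).trans hB
  have hden : m ^ 2 * s ^ 2 ≤ (w s * s) ^ 2 := by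
    rw [mul_pow]; gcongr
  calc |sin θ * (w s + w' s * s) / (w s * s) ^ 2|
      = |sin θ * (w s + w' s * s)| / (w s * s) ^ 2 := by rw [abs_div, abs_sq]
    _ ≤ B / (m ^ 2 * s ^ 2) := div_le_div₀ ((abs_nonneg _).trans hnum) hnum (by positivity) hden
    _ = B / m ^ 2 * s ^ (-2 : ℝ) := by
        rw [Real.rpow_neg hs0.le, Real.rpow_two]; field_simp

theorem exists_abs_integral_cos_div_sub_le (hm : 0 < m)
    (hφ : ∀ s, 1 ≤ s → HasDerivAt φ (w s) s) (hw : ∀ s, 1 ≤ s → HasDerivAt w (w' s) s)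
    (hw' : ContinuousOn w' (Ici 1)) (hmw : ∀ s, 1 ≤ s → m ≤ w s)
    (hB : ∀ s, 1 ≤ s → |w s + w' s * s| ≤ B) :
    ∃ L C : ℝ, ∀ ξ, 1 ≤ ξ → |(∫ s in (1 : ℝ)..ξ, cos (φ s) / s) - L| ≤ C * ξ⁻¹ := by
  set H := fun u => sin (φ u) / (w u * u)
  set R := fun u => sin (φ u) * (w u + w' u * u) / (w u * u) ^ 2
  have hpos : ∀ s, 1 ≤ s → 0 < s ∧ 0 < w s := fun s hs =>
    ⟨by linarith, by linarith [hmw s hs]⟩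
  have hH : ∀ s, 1 ≤ s → HasDerivAt H (cos (φ s) / s - R s) s := fun s hs =>
    hasDerivAt_sin_div_mul_self (hpos s hs).1.ne' (hpos s hs).2.ne' (hφ s hs) (hw s hs)
  have hR : ∀ s, 1 ≤ s → |R s| ≤ B / m ^ 2 * s ^ (-2 : ℝ) := fun s hs =>
    abs_sin_mul_div_sq_le hm hs (hmw s hs) (hB s hs) (φ s)
  have hφc : ContinuousOn φ (Ici 1) := fun s hs => (hφ s hs).continuousAt.continuousWithinAt
  have hwc : ContinuousOn w (Ici 1) := fun s hs => (hw s hs).continuousAt.continuousWithinAt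
  have hRc : ContinuousOn R (Ici 1) :=
    ((continuous_sin.comp_continuousOn hφc).mul (hwc.add (hw'.mul continuousOn_id))).div
      ((hwc.mul continuousOn_id).pow 2)
      fun s hs => pow_ne_zero 2 (mul_pos (hpos s hs).2 (hpos s hs).1).ne'
  have hcosc : ContinuousOn (fun s => cos (φ s) / s) (Ici 1) :=
    (continuous_cos.comp_continuousOn hφc).div continuousOn_id fun s hs => (hpos s hs).1.ne'
  have hRint : IntegrableOn R (Ioi 1) := integrableOn_Ioi_of_abs_le_mul_rpow one_pos hRc hR
  refine ⟨(∫ s in Ioi 1, R s) - H 1, 1 / m + B / m ^ 2, fun ξ hξ => ?_⟩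
  have hsub : uIcc 1 ξ ⊆ Ici 1 := by rw [uIcc_of_le hξ]; exact Icc_subset_Ici_self
  have hFTC : ∫ s in (1 : ℝ)..ξ, (cos (φ s) / s - R s) = H ξ - H 1 :=
    intervalIntegral.integral_eq_sub_of_hasDerivAt (fun s hs => hH s (hsub hs))
      ((hcosc.mono hsub).intervalIntegrable.sub (hRc.mono hsub).intervalIntegrable)
  rw [intervalIntegral.integral_sub (hcosc.mono hsub).intervalIntegrable
    (hRc.mono hsub).intervalIntegrable, ← intervalIntegral.integral_Ioi_sub_Ioi hRint hξ] at hFTC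
  have hHξ : |H ξ| ≤ 1 / m * ξ⁻¹ := by
    obtain ⟨hξ0, hwξ⟩ := hpos ξ hξ
    rw [abs_div, abs_of_pos (mul_pos hwξ hξ0), div_le_iff₀ (mul_pos hwξ hξ0)]
    calc |sin (φ ξ)| ≤ 1 := abs_sin_le_one _
      _ ≤ 1 / m * ξ⁻¹ * (w ξ * ξ) := by
        rw [show 1 / m * ξ⁻¹ * (w ξ * ξ) = w ξ / m by field_simp]
        exact (one_le_div hm).mpr (hmw ξ hξ)
  have htail := abs_setIntegral_Ioi_le_of_abs_le_mul_rpow (lt_of_lt_of_le one_pos hξ)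
    fun s hs => hR s (hξ.trans hs)
  calc |(∫ s in (1 : ℝ)..ξ, cos (φ s) / s) - ((∫ s in Ioi 1, R s) - H 1)|
      = |H ξ - ∫ s in Ioi ξ, R s| := by congr 1; linarith
    _ ≤ |H ξ| + |∫ s in Ioi ξ, R s| := abs_sub _ _
    _ ≤ (1 / m + B / m ^ 2) * ξ⁻¹ := by linarith

theorem exists_abs_integral_two_mul_sin_sq_div_sub_log_le (hm : 0 < m)
    (hφ : ∀ s, 1 ≤ s → HasDerivAt φ (w s) s) (hw : ∀ s, 1 ≤ s → HasDerivAt w (w' s) s)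
    (hw' : ContinuousOn w' (Ici 1)) (hmw : ∀ s, 1 ≤ s → m ≤ w s)
    (hB : ∀ s, 1 ≤ s → |w s + w' s * s| ≤ B) :
    ∃ L C : ℝ, ∀ ξ, 1 ≤ ξ →
      |(∫ s in (1 : ℝ)..ξ, 2 * sin (φ s) ^ 2 / s) - log ξ + L| ≤ C * ξ⁻¹ := by
  obtain ⟨L, C, hL⟩ := exists_abs_integral_cos_div_sub_le (φ := fun s => 2 * φ s)
    (w := fun s => 2 * w s) (w' := fun s => 2 * w' s) (m := 2 * m) (B := 2 * B) (by positivity)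
    (fun s hs => (hφ s hs).const_mul 2) (fun s hs => (hw s hs).const_mul 2)
    (continuousOn_const.mul hw') (fun s hs => by linarith [hmw s hs]) fun s hs => by
      rw [show 2 * w s + 2 * w' s * s = 2 * (w s + w' s * s) by ring, abs_mul, abs_two]
      linarith [hB s hs]
  refine ⟨L, C, fun ξ hξ => ?_⟩
  have hsub : uIcc 1 ξ ⊆ Ici 1 := by rw [uIcc_of_le hξ]; exact Icc_subset_Ici_self
  have hcos : IntervalIntegrable (fun s => cos (2 * φ s) / s) volume 1 ξ :=
    ContinuousOn.intervalIntegrable fun s hs =>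
      ((continuous_cos.continuousAt.comp ((hφ s (hsub hs)).continuousAt.const_mul 2)).div
        continuousAt_id (zero_lt_one.trans_le (hsub hs)).ne').continuousWithinAt
  have hinv : IntervalIntegrable (fun s : ℝ => s⁻¹) volume 1 ξ :=
    intervalIntegral.intervalIntegrable_inv (fun s hs => (zero_lt_one.trans_le (hsub hs)).ne')
      continuousOn_id
  have hsplit : ∫ s in (1 : ℝ)..ξ, 2 * sin (φ s) ^ 2 / s
      = log ξ - ∫ s in (1 : ℝ)..ξ, cos (2 * φ s) / s := by
    rw [← div_one ξ, ← integral_inv_of_pos one_pos (by linarith), div_one,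
      ← intervalIntegral.integral_sub hinv hcos]
    refine intervalIntegral.integral_congr fun s _ => ?_
    simp only [cos_two_mul, cos_sq']
    ring
  rw [hsplit, show ∀ x y : ℝ, x - y - x + L = -(y - L) by intros; ring, abs_neg]
  exact hL ξ hξ

end Oscillatory

/-- `√(1 - β_E(x))` for `x > 0`, where `K = E / c ^ α` and `p = 2α / (2 + α)`. -/
noncomputable def speed (K p x : ℝ) : ℝ := √(1 + K * x ^ (-p))

noncomputable def speedDeriv (K p x : ℝ) : ℝ := -(K * p * x ^ (-p - 1)) / (2 * speed K p x)

section Speed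

variable {K p : ℝ}

lemma one_le_speed (hK : 0 ≤ K) {x : ℝ} (hx : 0 ≤ x) : 1 ≤ speed K p x :=
  Real.one_le_sqrt.mpr (le_add_of_nonneg_right (mul_nonneg hK (rpow_nonneg hx _)))

lemma speed_le_sqrt_one_add (hK : 0 ≤ K) (hp : 0 ≤ p) {x : ℝ} (hx : 1 ≤ x) :
    speed K p x ≤ √(1 + K) := by
  have : x ^ (-p) ≤ 1 := rpow_le_one_of_one_le_of_nonpos hx (neg_nonpos.mpr hp)
  unfold speed; gcongr; nlinarith

lemma speed_le_one_add_mul_rpow (hK : 0 ≤ K) {x : ℝ} (hx : 0 < x) :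
    speed K p x ≤ 1 + √K * x ^ (-(p / 2)) := by
  have hroot : √K * x ^ (-(p / 2)) = √(K * x ^ (-p)) := by
    rw [sqrt_mul hK, sqrt_eq_rpow, sqrt_eq_rpow, ← rpow_mul hx.le]
    ring_nf
  have hu : 0 ≤ K * x ^ (-p) := by positivity
  rw [hroot]
  refine sqrt_le_iff.mpr ⟨by positivity, ?_⟩
  nlinarith [sq_sqrt hu, sqrt_nonneg (K * x ^ (-p))]

lemma continuousAt_speed {x : ℝ} (hx : 0 < x) : ContinuousAt (speed K p) x :=
  (continuousAt_const.add (continuousAt_const.mul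
    (continuousAt_rpow_const x (-p) (Or.inl hx.ne')))).sqrt

lemma hasDerivAt_speed (hK : 0 ≤ K) {x : ℝ} (hx : 0 < x) :
    HasDerivAt (speed K p) (speedDeriv K p x) x := by
  have hin : HasDerivAt (fun y => 1 + K * y ^ (-p)) (K * (-p * x ^ (-p - 1))) x :=
    ((hasDerivAt_rpow_const (Or.inl hx.ne')).const_mul K).const_add 1
  refine (hin.sqrt (by positivity)).congr_deriv ?_
  unfold speedDeriv speed
  ring

lemma continuousOn_speedDeriv (hK : 0 ≤ K) : ContinuousOn (speedDeriv K p) (Ioi 0) :=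
  fun x hx => ((continuousAt_const.mul (continuousAt_rpow_const x (-p - 1)
    (Or.inl (ne_of_gt hx)))).neg.div (continuousAt_const.mul (continuousAt_speed hx))
    (mul_pos two_pos (zero_lt_one.trans_le (one_le_speed hK (le_of_lt hx)))).ne').continuousWithinAt

lemma abs_speedDeriv_mul_le (hK : 0 ≤ K) (hp : 0 ≤ p) {x : ℝ} (hx : 1 ≤ x) :
    |speedDeriv K p x * x| ≤ K * p / 2 := by
  have hx0 : 0 < x := by linarith
  have hW := one_le_speed (p := p) hK hx0.le
  have hpow : x ^ (-p) ≤ 1 := rpow_le_one_of_one_le_of_nonpos hx (neg_nonpos.mpr hp)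
  have hmul : speedDeriv K p x * x = -(K * p * x ^ (-p)) / (2 * speed K p x) := by
    rw [speedDeriv, div_mul_eq_mul_div, rpow_sub_one hx0.ne']
    field_simp
  rw [hmul, abs_div, abs_neg, abs_of_nonneg (by positivity), abs_of_pos (by positivity)]
  calc K * p * x ^ (-p) / (2 * speed K p x) ≤ K * p * 1 / 2 := by gcongr; linarith
    _ = K * p / 2 := by ring

lemma abs_speed_add_speedDeriv_mul_le (hK : 0 ≤ K) (hp : 0 ≤ p) {x : ℝ} (hx : 1 ≤ x) :
    |speed K p x + speedDeriv K p x * x| ≤ √(1 + K) + K * p / 2 := by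
  have hW : |speed K p x| = speed K p x :=
    abs_of_nonneg (zero_le_one.trans (one_le_speed hK (zero_le_one.trans hx)))
  calc |speed K p x + speedDeriv K p x * x| ≤ |speed K p x| + |speedDeriv K p x * x| :=
        abs_add_le _ _
    _ ≤ √(1 + K) + K * p / 2 :=
        add_le_add (hW.trans_le (speed_le_sqrt_one_add hK hp hx)) (abs_speedDeriv_mul_le hK hp hx)

lemma intervalIntegrable_speed (hK : 0 ≤ K) (hp : p < 2) {s : ℝ} (hs : 0 ≤ s) :
    IntervalIntegrable (speed K p) volume 0 s := by
  have hmaj : IntervalIntegrable (fun x : ℝ => 1 + √K * x ^ (-(p / 2))) volume 0 s :=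
    intervalIntegrable_const.add
      ((intervalIntegral.intervalIntegrable_rpow' (by linarith)).const_mul _)
  refine hmaj.mono_fun ?_ ?_
  · rw [uIoc_of_le hs]
    exact ContinuousOn.aestronglyMeasurable
      (fun x hx => (continuousAt_speed hx.1).continuousWithinAt) measurableSet_Ioc
  · rw [uIoc_of_le hs]
    refine (ae_restrict_iff' measurableSet_Ioc).mpr (.of_forall fun x hx => ?_)
    dsimp only
    have hx0 : 0 < x := hx.1
    rw [norm_of_nonneg (zero_le_one.trans (one_le_speed hK hx0.le)),
      norm_of_nonneg (by positivity)]
    exact speed_le_one_add_mul_rpow hK hx0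

lemma hasDerivAt_integral_speed (hK : 0 ≤ K) (hp : p < 2) {s : ℝ} (hs : 0 < s) :
    HasDerivAt (fun u => ∫ x in (0 : ℝ)..u, speed K p x) (speed K p s) s :=
  intervalIntegral.integral_hasDerivAt_right (intervalIntegrable_speed hK hp hs.le)
    (ContinuousOn.stronglyMeasurableAtFilter isOpen_Ioi
      (fun _ hx => (continuousAt_speed hx).continuousWithinAt) s hs)
    (continuousAt_speed hs)

theorem exists_abs_integral_sin_sq_integral_speed_div_sub_log_le (hK : 0 ≤ K) (hp0 : 0 ≤ p)
    (hp2 : p < 2) (t : ℝ) :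
    ∃ L C : ℝ, ∀ ξ, 1 ≤ ξ →
      |(∫ s in (1 : ℝ)..ξ, 2 * sin (2 * (∫ x in (0 : ℝ)..s, speed K p x) + 2 * t) ^ 2 / s)
        - log ξ + L| ≤ C * ξ⁻¹ :=
  exists_abs_integral_two_mul_sin_sq_div_sub_log_le (w := fun s => 2 * speed K p s)
    (w' := fun s => 2 * speedDeriv K p s) (m := 2) (B := 2 * (√(1 + K) + K * p / 2)) two_pos
    (fun _ hs => ((hasDerivAt_integral_speed hK hp2 (by linarith)).const_mul 2).add_const _)
    (fun _ hs => (hasDerivAt_speed hK (by linarith)).const_mul 2)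
    (continuousOn_const.mul ((continuousOn_speedDeriv hK).mono
      fun _ hs => zero_lt_one.trans_le (mem_Ici.mp hs)))
    (fun _ hs => by linarith [one_le_speed (p := p) hK (zero_le_one.trans hs)])
    fun s hs => by
      rw [show 2 * speed K p s + 2 * speedDeriv K p s * s
        = 2 * (speed K p s + speedDeriv K p s * s) by ring, abs_mul, abs_two]
      linarith [abs_speed_add_speedDeriv_mul_le hK hp0 hs]

end Speed

theorem stmt18_general (α : ℝ) (hα0 : 0 < α)
    (a : ℝ) (E : ℝ) (hE : 0 < E) (t : ℝ)
    (c : ℝ) (hc : c = (1 + α / 2) ^ ((2 : ℝ) / (2 + α)))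
    (β : ℝ → ℝ) (hβ : ∀ x : ℝ, β x = -E / (c ^ α * x ^ (2 * α / (2 + α))))
    (lam : ℝ → ℝ)
    (hlam : ∀ s : ℝ, 1 ≤ s → lam s =
      2 * a * (Real.sin (2 * (∫ x in (0 : ℝ)..s, Real.sqrt (1 - β x)) + 2 * t)) ^ 2 / s) :
    ∃ c₀ : ℝ, ∃ C > (0 : ℝ), ∃ ε > (0 : ℝ), ∀ ξ : ℝ, 1 ≤ ξ →
      |(∫ s in (1 : ℝ)..ξ, lam s) - a * Real.log ξ + c₀| ≤ C * ξ ^ (-ε) := by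
  set p := 2 * α / (2 + α)
  have hp0 : 0 < p := by positivity
  have hp2 : p < 2 := (div_lt_iff₀ (by linarith)).mpr (by linarith)
  have hc0 : 0 < c := hc ▸ rpow_pos_of_pos (by linarith) _
  set K := E / c ^ α
  have hsqrt : ∀ x, 0 ≤ x → √(1 - β x) = speed K p x := by
    intro x hx
    rcases hx.eq_or_lt with rfl | hx0
    -- at `x = 0` both sides are `√1`, through `0 ^ p = 0` and division by zero
    · simp [speed, hβ, zero_rpow hp0.ne', zero_rpow (neg_ne_zero.mpr hp0.ne')]
    · rw [speed, hβ, rpow_neg hx0.le]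
      simp only [K]
      congr 1
      field_simp
      ring
  obtain ⟨L, C, hL⟩ := exists_abs_integral_sin_sq_integral_speed_div_sub_log_le
    (by positivity : 0 ≤ K) hp0.le hp2 t
  have hC : 0 ≤ C := by simpa using (abs_nonneg _).trans (hL 1 le_rfl)
  refine ⟨a * L, |a| * C + 1, by positivity, 1, one_pos, fun ξ hξ => ?_⟩
  have hlam' : ∫ s in (1 : ℝ)..ξ, lam s = a * ∫ s in (1 : ℝ)..ξ,
      2 * sin (2 * (∫ x in (0 : ℝ)..s, speed K p x) + 2 * t) ^ 2 / s := by
    rw [← intervalIntegral.integral_const_mul]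
    refine intervalIntegral.integral_congr fun s hs => ?_
    have hs1 : 1 ≤ s := by rw [uIcc_of_le hξ] at hs; exact hs.1
    rw [hlam s hs1, intervalIntegral.integral_congr fun x hx => hsqrt x ?_]
    · ring
    · rw [uIcc_of_le (by linarith)] at hx; exact hx.1
  rw [hlam', rpow_neg_one, ← mul_sub, ← mul_add, abs_mul]
  calc |a| * |_| ≤ |a| * (C * ξ⁻¹) := by gcongr; exact hL ξ hξ
    _ ≤ (|a| * C + 1) * ξ⁻¹ := by nlinarith [inv_pos.mpr (zero_lt_one.trans_le hξ)]

/-- for `0 < α < 2`, `a > 0`, `E > 0`, `t ∈ ℝ` and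
`λ(s) = 2a sin²(2∫₀^s √(1-β_E) + 2t)/s`, there exist `c₀ ∈ ℝ`, `C > 0`, `ε > 0` such that
`|∫₁^ξ λ(s) ds - a ln ξ + c₀| ≤ C ξ^{-ε}` for all `ξ ≥ 1`. -/
theorem stmt18 (α : ℝ) (hα0 : 0 < α) (hα2 : α < 2)
    (a : ℝ) (ha : 0 < a) (E : ℝ) (hE : 0 < E) (t : ℝ)
    (c : ℝ) (hc : c = (1 + α / 2) ^ ((2 : ℝ) / (2 + α)))
    (β : ℝ → ℝ) (hβ : ∀ x : ℝ, β x = -E / (c ^ α * x ^ (2 * α / (2 + α))))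
    (lam : ℝ → ℝ)
    (hlam : ∀ s : ℝ, 1 ≤ s → lam s =
      2 * a * (Real.sin (2 * (∫ x in (0 : ℝ)..s, Real.sqrt (1 - β x)) + 2 * t)) ^ 2 / s) :
    ∃ c₀ : ℝ, ∃ C > (0 : ℝ), ∃ ε > (0 : ℝ), ∀ ξ : ℝ, 1 ≤ ξ →
      |(∫ s in (1 : ℝ)..ξ, lam s) - a * Real.log ξ + c₀| ≤ C * ξ ^ (-ε) :=
  stmt18_general α hα0 a E hE t c hc β hβ lam hlam
end
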